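/- arXiv:2605.07104 — 7 statements merged into one kernel-verified Lean document; each statement's English description precedes it below -/
import Mathlib

section
/- Let {X_n}_{n≥N} be a nonnegative integrable process adapted to a filtration {F_n}, satisfying E[X_{n+1} | F_n] ≤ (1−β_n)X_n + b_n almost surely for deterministic sequences 0 ≤ β_n ≤ 1 and b_n ≥ 0. Let (q_n) be a positive deterministic sequence and define γ_n = 1 − (q_{n+1}/q_n)(1−β_n). If (after possibly increasing N) 0 ≤ γ_n ≤ 1, ∑_n γ_n = ∞, and ∑_n q_{n+1} b_n < ∞, then q_n X_n → 0 almost surely. -/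
/-!
With `Y n = q n * X n`, the identity `q (n + 1) * (1 - β n) = (1 - γ n) * q n` turns the drift
inequality into `E[Y (n + 1) | F n] ≤ Y n - γ n * Y n + q (n + 1) * b n`. For such an almost
supermartingale, `Y n + ∑ k < n, (γ k * Y k - q (k + 1) * b k)` is a supermartingale bounded
below, so it converges a.s.; hence `Y n` converges and `∑ γ n * Y n < ∞` a.s., and as
`∑ γ n = ∞` the limit of `Y n` can only be `0`.
-/

open MeasureTheory Filter Topology Finset

namespace MeasureTheory

variable {Ω : Type*} {m0 : MeasurableSpace Ω} {μ : Measure Ω}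

theorem condExp_const_mul_le {m : MeasurableSpace Ω} {f g : Ω → ℝ} {a : ℝ} (ha : 0 ≤ a)
    (h : μ[f | m] ≤ᵐ[μ] g) : μ[fun ω => a * f ω | m] ≤ᵐ[μ] fun ω => a * g ω := by
  filter_upwards [condExp_smul (μ := μ) a f m, h] with ω hω hfg
  exact hω.trans_le (mul_le_mul_of_nonneg_left hfg ha)

def Filtration.shift (ℱ : Filtration ℕ m0) (N : ℕ) : Filtration ℕ m0 where
  seq n := ℱ (n + N)
  mono' _ _ h := ℱ.mono (Nat.add_le_add_right h N)
  le' n := ℱ.le (n + N)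

variable [IsFiniteMeasure μ]

theorem Supermartingale.exists_ae_tendsto_of_forall_le {ℱ : Filtration ℕ m0} {f : ℕ → Ω → ℝ}
    (hf : Supermartingale f ℱ μ) {C : ℝ} (hC : ∀ n, ∀ᵐ ω ∂μ, C ≤ f n ω) :
    ∀ᵐ ω ∂μ, ∃ l, Tendsto (fun n => f n ω) atTop (𝓝 l) := by
  set g := f - fun _ _ => C
  have hg : Supermartingale g ℱ μ := hf.sub_martingale (martingale_const ℱ μ C)
  have hg0 : ∀ n, 0 ≤ᵐ[μ] g n := fun n => by
    filter_upwards [hC n] with ω hω using sub_nonneg.2 hω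
  have hbdd : ∀ n, eLpNorm ((-g) n) 1 μ ≤ ENNReal.ofReal (∫ ω, g 0 ω ∂μ) := fun n => by
    rw [Pi.neg_apply, eLpNorm_neg, eLpNorm_one_eq_lintegral_enorm,
      ← ofReal_integral_norm_eq_lintegral_enorm (hg.integrable n)]
    refine ENNReal.ofReal_le_ofReal ?_
    calc ∫ ω, ‖g n ω‖ ∂μ = ∫ ω, g n ω ∂μ :=
          integral_congr_ae <| by filter_upwards [hg0 n] with ω hω using Real.norm_of_nonneg hω
      _ ≤ ∫ ω, g 0 ω ∂μ := by
          simpa using hg.setIntegral_le (Nat.zero_le n) MeasurableSet.univ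
  filter_upwards [hg.neg.exists_ae_tendsto_of_bdd hbdd] with ω ⟨l, hl⟩
  exact ⟨C - l, by simpa [g] using hl.const_sub C⟩

section RobbinsSiegmund

variable {ℱ : Filtration ℕ m0} {Y Z : ℕ → Ω → ℝ} {c : ℕ → ℝ}

theorem supermartingale_add_sum_sub_of_condExp_le (hY : StronglyAdapted ℱ Y)
    (hYi : ∀ n, Integrable (Y n) μ) (hZ : StronglyAdapted ℱ Z) (hZi : ∀ n, Integrable (Z n) μ)
    (hdrift : ∀ n, μ[Y (n + 1) | ℱ n] ≤ᵐ[μ] fun ω => Y n ω - Z n ω + c n) :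
    Supermartingale (fun n ω => Y n ω + ∑ k ∈ range n, (Z k ω - c k)) ℱ μ := by
  set A : ℕ → Ω → ℝ := fun n ω => ∑ k ∈ range n, (Z k ω - c k)
  have hA : ∀ n j, n ≤ j + 1 → StronglyMeasurable[ℱ j] (A n) := fun n j hnj =>
    Finset.stronglyMeasurable_fun_sum _ fun k hk =>
      (hZ.stronglyMeasurable_le (by grind)).sub stronglyMeasurable_const
  have hAi : ∀ n, Integrable (A n) μ := fun n =>
    integrable_finsetSum _ fun k _ => (hZi k).sub (integrable_const _)
  refine supermartingale_nat (fun n => (hY n).add (hA n n n.le_succ))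
    (fun n => (hYi n).add (hAi n)) fun n => ?_
  have hcond : μ[Y (n + 1) + A (n + 1) | ℱ n] =ᵐ[μ] μ[Y (n + 1) | ℱ n] + A (n + 1) :=
    (condExp_add (hYi _) (hAi _) _).trans <| by
      rw [condExp_of_stronglyMeasurable (ℱ.le n) (hA _ n le_rfl) (hAi _)]
  filter_upwards [hcond, hdrift n] with ω hω hdω
  change μ[Y (n + 1) + A (n + 1) | ℱ n] ω ≤ Y n ω + A n ω
  rw [hω, Pi.add_apply, show A (n + 1) ω = A n ω + (Z n ω - c n) from sum_range_succ _ _]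
  linarith

theorem robbins_siegmund (hY : StronglyAdapted ℱ Y) (hYi : ∀ n, Integrable (Y n) μ)
    (hY0 : ∀ n, 0 ≤ᵐ[μ] Y n) (hZ : StronglyAdapted ℱ Z) (hZi : ∀ n, Integrable (Z n) μ)
    (hZ0 : ∀ n, 0 ≤ᵐ[μ] Z n) (hc : Summable c)
    (hdrift : ∀ n, μ[Y (n + 1) | ℱ n] ≤ᵐ[μ] fun ω => Y n ω - Z n ω + c n) :
    ∀ᵐ ω ∂μ, (∃ l, Tendsto (fun n => Y n ω) atTop (𝓝 l)) ∧ Summable fun n => Z n ω := by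
  have hU := supermartingale_add_sum_sub_of_condExp_le hY hYi hZ hZi hdrift
  have hsum_sub : ∀ n ω, ∑ k ∈ range n, (Z k ω - c k) =
      ∑ k ∈ range n, Z k ω - ∑ k ∈ range n, c k := fun n ω => sum_sub_distrib _ _
  obtain ⟨C, hC⟩ : ∃ C, ∀ n, ∑ k ∈ range n, c k ≤ C := by
    obtain ⟨C, hC⟩ := hc.hasSum.tendsto_sum_nat.bddAbove_range
    exact ⟨C, fun n => hC ⟨n, rfl⟩⟩
  have hY0' : ∀ᵐ ω ∂μ, ∀ n, 0 ≤ Y n ω := ae_all_iff.2 hY0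
  have hZ0' : ∀ᵐ ω ∂μ, ∀ n, 0 ≤ Z n ω := ae_all_iff.2 hZ0
  have hUC : ∀ n, ∀ᵐ ω ∂μ, -C ≤ Y n ω + ∑ k ∈ range n, (Z k ω - c k) := fun n => by
    filter_upwards [hY0', hZ0'] with ω hYω hZω
    have hS0 := sum_nonneg fun k (_ : k ∈ range n) => hZω k
    linarith [hsum_sub n ω, hYω n, hC n]
  filter_upwards [hU.exists_ae_tendsto_of_forall_le hUC, hY0', hZ0'] with ω ⟨l, hl⟩ hYω hZω
  obtain ⟨B, hB⟩ := hl.bddAbove_range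
  have hZs : Summable fun n => Z n ω := summable_of_sum_range_le hZω (c := B + C) fun n => by
    linarith [hsum_sub n ω, hYω n, hC n, hB ⟨n, rfl⟩]
  refine ⟨⟨l - ∑' n, Z n ω + ∑' n, c n, ?_⟩, hZs⟩
  refine ((hl.sub hZs.hasSum.tendsto_sum_nat).add hc.hasSum.tendsto_sum_nat).congr fun n => ?_
  simp only [hsum_sub]
  ring

end RobbinsSiegmund

end MeasureTheory

theorem eq_zero_of_tendsto_of_summable_mul {γ u : ℕ → ℝ} {l : ℝ} (hγ : ¬Summable γ)
    (hu : Tendsto u atTop (𝓝 l)) (hγu : Summable fun n => γ n * u n) : l = 0 := by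
  by_contra hl
  refine hγ (summable_of_isBigO_nat hγu ?_)
  have hγ_eq : (fun n => γ n * u n * (u n)⁻¹) =ᶠ[atTop] γ := by
    filter_upwards [hu.eventually_ne hl] with n hn using mul_inv_cancel_right₀ hn _
  simpa using ((Asymptotics.isBigO_refl (fun n => γ n * u n) atTop).mul
    ((hu.inv₀ hl).isBigO_one ℝ)).congr' hγ_eq (by simp)

theorem weighted_robbins_siegmund_general
    {Ω : Type*} {m0 : MeasurableSpace Ω} {μ : Measure Ω} [IsProbabilityMeasure μ]
    (F : Filtration ℕ m0) (X : ℕ → Ω → ℝ) (β b q γ : ℕ → ℝ) (N : ℕ)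
    (hadapted : Adapted F X)
    (hnonneg : ∀ n, ∀ᵐ ω ∂μ, 0 ≤ X n ω)
    (hint : ∀ n, Integrable (X n) μ)
    (hq : ∀ n, 0 < q n)
    (hγdef : ∀ n, γ n = 1 - (q (n + 1) / q n) * (1 - β n))
    (hdrift : ∀ n, N ≤ n →
      ∀ᵐ ω ∂μ, (μ[X (n + 1) | F n]) ω ≤ (1 - β n) * X n ω + b n)
    (hγ0 : ∀ n, N ≤ n → 0 ≤ γ n)
    (hγdiv : ¬ Summable (fun n => γ n))
    (hqb : Summable (fun n => q (n + 1) * b n)) :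
    ∀ᵐ ω ∂μ, Tendsto (fun n => q n * X n ω) atTop (nhds 0) := by
  have hrel : ∀ n, q (n + 1) * (1 - β n) = (1 - γ n) * q n := fun n => by
    rw [hγdef]; field_simp [(hq n).ne']; ring
  set Y : ℕ → Ω → ℝ := fun n ω => q (n + N) * X (n + N) ω
  have hYa : StronglyAdapted (F.shift N) Y := fun n =>
    (hadapted (n + N)).stronglyMeasurable.const_mul _
  have hYi : ∀ n, Integrable (Y n) μ := fun n => (hint _).const_mul _
  have hY0 : ∀ n, 0 ≤ᵐ[μ] Y n := fun n => by
    filter_upwards [hnonneg (n + N)] with ω hω using mul_nonneg (hq _).le hω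
  have hYdrift : ∀ n, μ[Y (n + 1) | F.shift N n] ≤ᵐ[μ]
      fun ω => Y n ω - γ (n + N) * Y n ω + q (n + N + 1) * b (n + N) := fun n => by
    have h := condExp_const_mul_le (hq (n + N + 1)).le (hdrift (n + N) (Nat.le_add_left N n))
    simp only [Y, Nat.add_right_comm n 1 N]
    filter_upwards [h] with ω hω
    exact hω.trans_eq (by rw [mul_add, ← mul_assoc, hrel]; ring)
  have hγY0 : ∀ n, 0 ≤ᵐ[μ] fun ω => γ (n + N) * Y n ω := fun n => by
    filter_upwards [hY0 n] with ω hω using mul_nonneg (hγ0 _ (Nat.le_add_left N n)) hω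
  filter_upwards [robbins_siegmund hYa hYi hY0 (fun n => (hYa n).const_mul _)
      (fun n => (hYi n).const_mul _) hγY0 ((summable_nat_add_iff N).2 hqb) hYdrift]
    with ω ⟨⟨l, hl⟩, hγY⟩
  have hl0 : l = 0 := eq_zero_of_tendsto_of_summable_mul
    (fun h => hγdiv ((summable_nat_add_iff N).1 h)) hl hγY
  exact (tendsto_add_atTop_iff_nat N).1 (hl0 ▸ hl)

/-- Weighted Robbins–Siegmund lemma: if a nonnegative adapted integrable process
satisfies `E[X_{n+1} | F_n] ≤ (1−β_n)X_n + b_n` a.s. for `n ≥ N`, and the weights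
`q_n > 0` satisfy `0 ≤ γ_n ≤ 1`, `∑ γ_n = ∞`, `∑ q_{n+1} b_n < ∞`, where
`γ_n = 1 − (q_{n+1}/q_n)(1−β_n)`, then `q_n X_n → 0` a.s. -/
theorem weighted_robbins_siegmund
    {Ω : Type*} {m0 : MeasurableSpace Ω} {μ : Measure Ω} [IsProbabilityMeasure μ]
    (F : Filtration ℕ m0) (X : ℕ → Ω → ℝ) (β b q γ : ℕ → ℝ) (N : ℕ)
    (hadapted : Adapted F X)
    (hnonneg : ∀ n, ∀ᵐ ω ∂μ, 0 ≤ X n ω)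
    (hint : ∀ n, Integrable (X n) μ)
    (hβ0 : ∀ n, 0 ≤ β n) (hβ1 : ∀ n, β n ≤ 1) (hb : ∀ n, 0 ≤ b n)
    (hq : ∀ n, 0 < q n)
    (hγdef : ∀ n, γ n = 1 - (q (n + 1) / q n) * (1 - β n))
    (hdrift : ∀ n, N ≤ n →
      ∀ᵐ ω ∂μ, (μ[X (n + 1) | F n]) ω ≤ (1 - β n) * X n ω + b n)
    (hγ0 : ∀ n, N ≤ n → 0 ≤ γ n) (hγ1 : ∀ n, N ≤ n → γ n ≤ 1)
    (hγdiv : ¬ Summable (fun n => γ n))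
    (hqb : Summable (fun n => q (n + 1) * b n)) :
    ∀ᵐ ω ∂μ, Tendsto (fun n => q n * X n ω) atTop (nhds 0) :=
  weighted_robbins_siegmund_general F X β b q γ N hadapted hnonneg hint hq hγdef hdrift hγ0 hγdiv
    hqb
end

section
/- Let α_n = α/(n+1)^η with α > 0 and 1/2 < η < 1, and let {X_n} be a nonnegative adapted integrable process satisfying, for all n beyond some deterministic index, E[X_{n+1} | F_n] ≤ (1 − c₀α_n + C₀ r_n) X_n + C₀ r_n, where r_n = α_n² + |α_{n+1} − α_n|, c₀ > 0, C₀ < ∞. Then for every 0 ≤ ζ < 2η − 1, (n+1)^ζ X_n → 0 almost surely. -/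
open MeasureTheory Filter Real

section helpers
open Filter Real

lemma rbound2 (α η : ℝ) (hα : 0 < α) (hη1 : 1/2 < η) (hη2 : η < 1) (n : ℕ) :
    (α / ((n:ℝ)+1)^η)^2 + |α / (((n:ℕ)+1:ℝ)+1)^η - α / ((n:ℝ)+1)^η|
      ≤ (α^2 + α) * ((n:ℝ)+1) ^ (-(2*η)) := by
  have hn1 : (0:ℝ) < (n:ℝ)+1 := by positivity
  have hn1' : (1:ℝ) ≤ (n:ℝ)+1 := by simp
  have hn2 : (0:ℝ) < (n:ℝ)+2 := by positivity
  have hηpos : 0 < η := by linarith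
  have hp1 : (0:ℝ) < ((n:ℝ)+1)^η := rpow_pos_of_pos hn1 η
  have hp2 : (0:ℝ) < ((n:ℝ)+2)^η := rpow_pos_of_pos hn2 η
  have hcast : (((n:ℕ)+1:ℝ)+1) = (n:ℝ)+2 := by push_cast; ring
  rw [hcast]
  have hmono : ((n:ℝ)+1)^η ≤ ((n:ℝ)+2)^η :=
    rpow_le_rpow (le_of_lt hn1) (by linarith) (le_of_lt hηpos)
  have hle : α / ((n:ℝ)+2)^η ≤ α / ((n:ℝ)+1)^η :=
    div_le_div_of_nonneg_left hα.le hp1 hmono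
  have habs : |α / ((n:ℝ)+2)^η - α / ((n:ℝ)+1)^η| = α / ((n:ℝ)+1)^η - α / ((n:ℝ)+2)^η := by
    rw [abs_sub_comm, abs_of_nonneg (by linarith)]
  rw [habs]
  -- step 1 : the difference bound
  set x : ℝ := ((n:ℝ)+1)/((n:ℝ)+2) with hx
  have hx0 : 0 < x := by positivity
  have hx1 : x ≤ 1 := by rw [hx, div_le_one hn2]; linarith
  have hxη : x ≤ x ^ η := by
    have := rpow_le_rpow_of_exponent_ge hx0 hx1 hη2.le
    simpa using this
  have hdiff : α / ((n:ℝ)+1)^η - α / ((n:ℝ)+2)^η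
      = (α / ((n:ℝ)+1)^η) * (1 - x^η) := by
    rw [div_rpow (by linarith) hn2.le]
    field_simp
  have h1x : 1 - x^η ≤ 1/((n:ℝ)+1) := by
    have : 1 - x ≤ 1/((n:ℝ)+1) := by
      rw [hx]
      have h : 1 - ((n:ℝ)+1)/((n:ℝ)+2) = 1/((n:ℝ)+2) := by
        field_simp
        ring
      rw [h, div_le_div_iff₀ hn2 hn1]
      nlinarith
    linarith
  have hdb : α / ((n:ℝ)+1)^η - α / ((n:ℝ)+2)^η ≤ α * ((n:ℝ)+1)^(-(2*η)) := by
    rw [hdiff]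
    have h2 : (α / ((n:ℝ)+1)^η) * (1 - x^η) ≤ (α / ((n:ℝ)+1)^η) * (1/((n:ℝ)+1)) := by
      apply mul_le_mul_of_nonneg_left h1x (by positivity)
    refine h2.trans ?_
    have : (α / ((n:ℝ)+1)^η) * (1/((n:ℝ)+1)) = α * ((n:ℝ)+1)^(-(η+1)) := by
      rw [rpow_neg hn1.le, rpow_add hn1, rpow_one]
      field_simp
    rw [this]
    apply mul_le_mul_of_nonneg_left _ hα.le
    exact rpow_le_rpow_of_exponent_le hn1' (by linarith)
  have hsq : (α / ((n:ℝ)+1)^η)^2 = α^2 * ((n:ℝ)+1)^(-(2*η)) := by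
    rw [div_pow, rpow_neg hn1.le]
    rw [← rpow_natCast (((n:ℝ)+1)^η) 2, ← rpow_mul hn1.le]
    norm_num
    rw [mul_comm η 2]
    ring
  rw [hsq]; nlinarith [rpow_pos_of_pos hn1 (-(2*η))]

lemma sumrpow (s : ℝ) (hs : s < -1) : Summable (fun n : ℕ => ((n:ℝ)+1)^s) := by
  have h := (Real.summable_nat_rpow (p := s)).2 hs
  have h2 := (summable_nat_add_iff (f := fun n : ℕ => (n:ℝ)^s) 1).2 h
  refine h2.congr fun n => ?_
  push_cast
  ring_nf

lemma notsumrpow (s : ℝ) (hs : -1 ≤ s) : ¬ Summable (fun n : ℕ => ((n:ℝ)+1)^s) := by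
  intro h
  have h2 : Summable (fun n : ℕ => ((n:ℝ))^s) := by
    rw [← summable_nat_add_iff 1]
    refine h.congr fun n => ?_
    push_cast
    ring_nf
  rw [Real.summable_nat_rpow] at h2
  linarith

lemma evkey (α η c₀ C' K ζ : ℝ) (hα : 0 < α) (hη1 : 1/2 < η) (hη2 : η < 1)
    (hc₀ : 0 < c₀) (hC' : 0 ≤ C') (hK : 0 < K) (hζ0 : 0 ≤ ζ) (hζ1 : ζ ≤ 1) :
    ∃ N₁ : ℕ, ∀ m : ℕ, N₁ ≤ m → ∀ ρ : ℝ, 0 ≤ ρ → ρ ≤ K * ((m:ℝ)+1)^(-(2*η)) →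
      0 ≤ 1 - c₀*(α/((m:ℝ)+1)^η) + C'*ρ ∧
      (((m:ℝ)+1)+1)^ζ * (1 - c₀*(α/((m:ℝ)+1)^η) + C'*ρ)
        ≤ ((m:ℝ)+1)^ζ * (1 - c₀/2*(α/((m:ℝ)+1)^η)) := by
  have hηpos : 0 < η := by linarith
  -- the two smallness conditions hold eventually
  have hu : Tendsto (fun m : ℕ => c₀*α*((m:ℝ)+1)^(-η)) atTop (nhds 0) := by
    have h0 : Tendsto (fun m : ℕ => ((m:ℝ)+1)) atTop atTop :=
      tendsto_atTop_add_const_right _ 1 tendsto_natCast_atTop_atTop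
    have h1 := (tendsto_rpow_neg_atTop hηpos).comp h0
    simpa using h1.const_mul (c₀*α)
  have hv : Tendsto (fun m : ℕ => C'*K*((m:ℝ)+1)^(-η) + (1+C'*K)*((m:ℝ)+1)^(η-1)) atTop (nhds 0) := by
    have h0 : Tendsto (fun m : ℕ => ((m:ℝ)+1)) atTop atTop :=
      tendsto_atTop_add_const_right _ 1 tendsto_natCast_atTop_atTop
    have h1 := (tendsto_rpow_neg_atTop hηpos).comp h0
    have h2 := (tendsto_rpow_neg_atTop (y := 1-η) (by linarith)).comp h0
    have h2' : Tendsto (fun m : ℕ => ((m:ℝ)+1)^(η-1)) atTop (nhds 0) := by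
      have : (fun m : ℕ => ((m:ℝ)+1)^(η-1)) = fun m : ℕ => ((m:ℝ)+1)^(-(1-η)) := by
        funext m; ring_nf
      rw [this]; exact h2
    have := (h1.const_mul (C'*K)).add (h2'.const_mul (1+C'*K))
    simpa using this
  have hev : ∀ᶠ m : ℕ in atTop,
      c₀*α*((m:ℝ)+1)^(-η) ≤ 1 ∧
      C'*K*((m:ℝ)+1)^(-η) + (1+C'*K)*((m:ℝ)+1)^(η-1) ≤ c₀*α/2 := by
    filter_upwards [hu.eventually_le_const (by norm_num : (0:ℝ) < 1),
      hv.eventually_le_const (by positivity : (0:ℝ) < c₀*α/2)] with m h1 h2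
    exact ⟨h1, h2⟩
  obtain ⟨N₁, hN₁⟩ := eventually_atTop.1 hev
  refine ⟨N₁, fun m hm ρ hρ0 hρK => ?_⟩
  obtain ⟨h1, h2⟩ := hN₁ m hm
  clear hu hv hev hN₁ hm
  set P : ℝ := (m:ℝ)+1 with hPdef
  have hP : (0:ℝ) < P := by positivity
  have hP1 : (1:ℝ) ≤ P := by simp [hPdef]
  set t : ℝ := P^(-η) with htdef
  have ht : 0 < t := rpow_pos_of_pos hP _
  have ht1 : t ≤ 1 := rpow_le_one_of_one_le_of_nonpos hP1 (by linarith)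
  have hdiv : α / P^η = α * t := by
    rw [htdef, rpow_neg hP.le]; ring
  have htt : P^(-(2*η)) = t*t := by
    rw [htdef, ← rpow_add hP]; ring_nf
  have hεt : P^(η-1) * t = 1/P := by
    rw [htdef, ← rpow_add hP]
    have he : η - 1 + -η = -1 := by ring
    rw [he, rpow_neg_one, one_div]
  clear_value t
  clear_value P
  rw [hdiv]
  have hρK' : ρ ≤ K * (t*t) := by rw [← htt]; exact hρK
  constructor
  · linarith [h1, mul_nonneg hC' hρ0]
  · -- key numeric inequality
    have key : C'*ρ + (1/P)*(1 + C'*K) ≤ (c₀/2)*(α*t) := by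
      have e1 : C'*ρ ≤ (C'*K*t)*t := by nlinarith
      have e2 : (1/P)*(1+C'*K) = ((1+C'*K)*P^(η-1))*t := by rw [← hεt]; ring
      have e3 : (C'*K*t + (1+C'*K)*P^(η-1))*t ≤ (c₀*α/2)*t :=
        mul_le_mul_of_nonneg_right h2 ht.le
      linarith [e1, e2, e3]
    have hE0 : 0 ≤ 1 - c₀*(α*t) + C'*ρ := by
      linarith [h1, mul_nonneg hC' hρ0]
    have htt1 : t*t ≤ 1 := by nlinarith
    have hρκ : ρ ≤ K := by
      have h5 := mul_le_mul_of_nonneg_left htt1 hK.le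
      linarith [hρK']
    have hEB : 1 - c₀*(α*t) + C'*ρ ≤ 1 + C'*K := by
      have h6 := mul_le_mul_of_nonneg_left hρκ hC'
      linarith [mul_pos hc₀ (mul_pos hα ht), h6]
    have hq : (P+1)^ζ ≤ P^ζ * ((P+1)/P) := by
      have hb1 : (1:ℝ) ≤ (P+1)/P := by
        rw [le_div_iff₀ hP]; linarith
      have h3 : ((P+1)/P)^ζ ≤ ((P+1)/P)^(1:ℝ) :=
        rpow_le_rpow_of_exponent_le hb1 hζ1
      have h4 : (P+1)^ζ = P^ζ * ((P+1)/P)^ζ := by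
        rw [div_rpow (by linarith) hP.le]
        field_simp
      rw [h4]
      rw [rpow_one] at h3
      exact mul_le_mul_of_nonneg_left h3 (rpow_pos_of_pos hP ζ).le
    have step : (P+1)^ζ * (1 - c₀*(α*t) + C'*ρ) ≤ P^ζ * ((P+1)/P) * (1 - c₀*(α*t) + C'*ρ) :=
      mul_le_mul_of_nonneg_right hq hE0
    refine step.trans ?_
    have hPinv : (P+1)/P = 1 + 1/P := by field_simp
    rw [hPinv]
    have final : (1 + 1/P) * (1 - c₀*(α*t) + C'*ρ) ≤ 1 - c₀/2*(α*t) := by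
      have hP' : 0 < 1/P := by positivity
      have e5 : (1/P) * (1 - c₀*(α*t) + C'*ρ) ≤ (1/P) * (1 + C'*K) :=
        mul_le_mul_of_nonneg_left hEB hP'.le
      linarith [e5, key]
    calc P^ζ * (1 + 1/P) * (1 - c₀*(α*t) + C'*ρ)
        = P^ζ * ((1 + 1/P) * (1 - c₀*(α*t) + C'*ρ)) := by ring
      _ ≤ P^ζ * (1 - c₀/2*(α*t)) :=
          mul_le_mul_of_nonneg_left final (rpow_pos_of_pos hP ζ).le

lemma rbound' (α η : ℝ) (hα : 0 < α) (hη1 : 1/2 < η) (hη2 : η < 1) (n : ℕ) :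
    (α / ((n:ℝ)+1)^η)^2 + |α / (((n:ℝ)+1)+1)^η - α / ((n:ℝ)+1)^η|
      ≤ (α^2 + α) * ((n:ℝ)+1) ^ (-(2*η)) := rbound2 α η hα hη1 hη2 n

lemma sumshift (s : ℝ) (hs : s < -1) (M : ℕ) :
    Summable (fun k : ℕ => ((M:ℝ)+(k:ℝ)+1)^s) := by
  have h := (summable_nat_add_iff (f := fun n : ℕ => ((n:ℝ)+1)^s) M).2 (sumrpow s hs)
  refine h.congr fun k => ?_
  push_cast
  ring_nf

end helpers

open MeasureTheory Filter

/-- Power-law drift rate lemma (sub-harmonic case `1/2 < η < 1`):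
if `E[X_{n+1}|F_n] ≤ (1 − c₀α_n + C₀r_n)X_n + C₀r_n` for all `n` beyond a
deterministic index, with `α_n = α/(n+1)^η` and `r_n = α_n² + |α_{n+1}−α_n|`,
then `(n+1)^ζ X_n → 0` a.s. for every `0 ≤ ζ < 2η − 1`. -/
theorem power_law_drift_rate_subharmonic
    {Ω : Type*} {m0 : MeasurableSpace Ω} {μ : Measure Ω} [IsProbabilityMeasure μ]
    (F : Filtration ℕ m0) (X : ℕ → Ω → ℝ)
    (α η c₀ C₀ : ℝ) (hα : 0 < α) (hη1 : 1 / 2 < η) (hη2 : η < 1)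
    (hc₀ : 0 < c₀)
    (αseq r : ℕ → ℝ)
    (hαdef : ∀ n : ℕ, αseq n = α / ((n : ℝ) + 1) ^ η)
    (hrdef : ∀ n : ℕ, r n = (αseq n) ^ 2 + |αseq (n + 1) - αseq n|)
    (hadapted : Adapted F X)
    (hnonneg : ∀ n, ∀ᵐ ω ∂μ, 0 ≤ X n ω)
    (hint : ∀ n, Integrable (X n) μ)
    (N : ℕ)
    (hdrift : ∀ n, N ≤ n →
      ∀ᵐ ω ∂μ, (μ[X (n + 1) | F n]) ω ≤ (1 - c₀ * αseq n + C₀ * r n) * X n ω + C₀ * r n) :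
    ∀ ζ : ℝ, 0 ≤ ζ → ζ < 2 * η - 1 →
      ∀ᵐ ω ∂μ, Tendsto (fun n : ℕ => ((n : ℝ) + 1) ^ ζ * X n ω) atTop (nhds 0) := by
  intro ζ hζ0 hζ
  classical
  have hη0 : 0 < η := by linarith
  have hζ1 : ζ ≤ 1 := by linarith
  set C' : ℝ := max C₀ 0 with hC'def
  have hC' : 0 ≤ C' := le_max_right _ _
  have hC0C' : C₀ ≤ C' := le_max_left _ _
  set K : ℝ := α^2 + α with hKdef
  have hK : 0 < K := by positivity
  set q : ℕ → ℝ := fun n => ((n:ℝ)+1)^ζ with hqdef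
  have hq_pos : ∀ n, 0 < q n := fun n => Real.rpow_pos_of_pos (by positivity) _
  have hα_pos : ∀ n, 0 < αseq n := fun n => by
    rw [hαdef]; positivity
  have hr0 : ∀ n, 0 ≤ r n := fun n => by
    rw [hrdef]; positivity
  have hrK : ∀ n, r n ≤ K * ((n:ℝ)+1)^(-(2*η)) := by
    intro n
    have h := rbound' α η hα hη1 hη2 n
    rw [hrdef n, hαdef n, hαdef (n+1)]
    push_cast
    convert h using 3
  -- eventual drift inequality
  obtain ⟨N₁, hN₁⟩ := evkey α η c₀ C' K ζ hα hη1 hη2 hc₀ hC' hK hζ0 hζ1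
  set M := max N N₁ with hMdef
  have hMN : N ≤ M := le_max_left _ _
  have hMN₁ : N₁ ≤ M := le_max_right _ _
  have hkey : ∀ i : ℕ, 0 ≤ 1 - c₀ * αseq (M+i) + C' * r (M+i) ∧
      q (M+i+1) * (1 - c₀ * αseq (M+i) + C' * r (M+i))
        ≤ q (M+i) * (1 - c₀/2 * αseq (M+i)) := by
    intro i
    have h := hN₁ (M+i) (hMN₁.trans (Nat.le_add_right M i)) (r (M+i)) (hr0 _) (by
      have := hrK (M+i); push_cast at this ⊢; convert this using 3)
    rw [hαdef (M+i)]
    constructor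
    · have := h.1; push_cast at this ⊢; convert this using 3 <;> push_cast <;> ring
    · have := h.2; push_cast at this ⊢; convert this using 3 <;> push_cast <;> ring
  -- the correction sequence
  set b : ℕ → ℝ := fun k => q (M+k+1) * (C' * r (M+k)) with hbdef
  have hb0 : ∀ k, 0 ≤ b k := fun k =>
    mul_nonneg (hq_pos _).le (mul_nonneg hC' (hr0 _))
  have hbsum : Summable b := by
    refine Summable.of_nonneg_of_le hb0 (fun k => ?_)
      ((sumshift (ζ-2*η) (by linarith) M).mul_left (2^ζ*(C'*K)))
    set x : ℝ := (M:ℝ)+(k:ℝ)+1 with hxdef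
    have hx1 : (1:ℝ) ≤ x := by
      have : (0:ℝ) ≤ (M:ℝ)+(k:ℝ) := by positivity
      rw [hxdef]; linarith
    have hx0 : (0:ℝ) < x := by positivity
    have hq1 : q (M+k+1) ≤ 2^ζ * x^ζ := by
      have h1 : ((M+k+1:ℕ):ℝ)+1 ≤ 2*x := by push_cast; linarith
      have h2 : (((M+k+1:ℕ):ℝ)+1)^ζ ≤ (2*x)^ζ :=
        Real.rpow_le_rpow (by positivity) h1 hζ0
      calc q (M+k+1) = (((M+k+1:ℕ):ℝ)+1)^ζ := rfl
        _ ≤ (2*x)^ζ := h2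
        _ = 2^ζ * x^ζ := Real.mul_rpow (by norm_num) hx0.le
    have hr1 : r (M+k) ≤ K * x^(-(2*η)) := by
      have := hrK (M+k); push_cast at this ⊢; convert this using 3
    have e1 : b k ≤ (2^ζ * x^ζ) * (C' * (K * x^(-(2*η)))) := by
      rw [hbdef]
      apply mul_le_mul hq1 (mul_le_mul_of_nonneg_left hr1 hC')
        (mul_nonneg hC' (hr0 _))
      positivity
    refine e1.trans (le_of_eq ?_)
    have e2 : x^ζ * x^(-(2*η)) = x^(ζ-2*η) := by
      rw [← Real.rpow_add hx0]; ring_nf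
    calc (2^ζ * x^ζ) * (C' * (K * x^(-(2*η))))
        = 2^ζ*(C'*K) * (x^ζ * x^(-(2*η))) := by ring
      _ = 2^ζ*(C'*K) * x^(ζ-2*η) := by rw [e2]
  set B : ℝ := ∑' k, b k with hBdef
  have hTB : ∀ n, ∑ k ∈ Finset.range n, b k ≤ B :=
    fun n => Summable.sum_le_tsum _ (fun k _ => hb0 k) hbsum
  -- shifted filtration
  set G : Filtration ℕ m0 :=
    ⟨fun n => F (M+n), fun i j hij => F.mono (Nat.add_le_add_left hij M),
      fun n => F.le _⟩ with hGdef
  have hGF : ∀ n, G n = F (M+n) := fun n => rfl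
  -- the Robbins–Siegmund supermartingale
  set f : ℕ → Ω → ℝ := fun n ω => q (M+n) * X (M+n) ω
    + ((∑ k ∈ Finset.range n, (c₀/2 * αseq (M+k) * q (M+k)) * X (M+k) ω)
      + (B - ∑ k ∈ Finset.range n, b k)) with hfdef
  have hfadp : StronglyAdapted G f := by
    intro n
    apply StronglyMeasurable.add
    · exact (hadapted.stronglyAdapted (M+n)).const_mul _
    apply StronglyMeasurable.add
    · apply Finset.stronglyMeasurable_fun_sum
      intro k hk
      have hkn : M + k ≤ M + n :=
        Nat.add_le_add_left (Finset.mem_range.1 hk).le M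
      exact ((hadapted.stronglyAdapted (M+k)).mono (F.mono hkn)).const_mul _
    · exact stronglyMeasurable_const
  have hfint : ∀ n, Integrable (f n) μ := by
    intro n
    apply Integrable.add
    · exact (hint (M+n)).const_mul _
    apply Integrable.add
    · exact integrable_finset_sum _ (fun k _ => (hint (M+k)).const_mul _)
    · exact integrable_const _
  have hcond : ∀ i, μ[f (i+1)|G i] ≤ᵐ[μ] f i := by
    intro i
    set W : Ω → ℝ := fun ω =>
      (∑ k ∈ Finset.range (i+1), (c₀/2 * αseq (M+k) * q (M+k)) * X (M+k) ω)
        + (B - ∑ k ∈ Finset.range (i+1), b k) with hWdef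
    have hsplit : f (i+1) = (fun ω => q (M+i+1) * X (M+i+1) ω) + W := by
      funext ω; rfl
    have hWmeas : StronglyMeasurable[G i] W := by
      apply StronglyMeasurable.add
      · apply Finset.stronglyMeasurable_fun_sum
        intro k hk
        have hkn : M + k ≤ M + i :=
          Nat.add_le_add_left (Nat.lt_succ_iff.1 (Finset.mem_range.1 hk)) M
        exact ((hadapted.stronglyAdapted (M+k)).mono (F.mono hkn)).const_mul _
      · exact stronglyMeasurable_const
    have hWint : Integrable W μ := by
      apply Integrable.add
      · exact integrable_finset_sum _ (fun k _ => (hint (M+k)).const_mul _)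
      · exact integrable_const _
    have hAint : Integrable (fun ω => q (M+i+1) * X (M+i+1) ω) μ :=
      (hint (M+i+1)).const_mul _
    have h1 : μ[f (i+1)|G i] =ᵐ[μ]
        μ[(fun ω => q (M+i+1) * X (M+i+1) ω)|G i] + μ[W|G i] := by
      rw [hsplit]; exact condExp_add hAint hWint _
    have h2 : μ[(fun ω => q (M+i+1) * X (M+i+1) ω)|G i]
        =ᵐ[μ] fun ω => q (M+i+1) * (μ[X (M+i+1)|F (M+i)]) ω := by
      have hsm : (fun ω => q (M+i+1) * X (M+i+1) ω) = q (M+i+1) • X (M+i+1) := rfl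
      rw [hsm]
      filter_upwards [condExp_smul (μ := μ) (m := F (M+i)) (q (M+i+1)) (X (M+i+1))]
        with ω hω
      simpa using hω
    have h3 : μ[W|G i] = W := condExp_of_stronglyMeasurable (G.le i) hWmeas hWint
    have hdr := hdrift (M+i) (hMN.trans (Nat.le_add_right M i))
    obtain ⟨hk1, hk2⟩ := hkey i
    filter_upwards [h1, h2, hdr, hnonneg (M+i)] with ω e1 e2 hd hx
    have e4 : (μ[f (i+1)|G i]) ω
        = q (M+i+1) * (μ[X (M+i+1)|F (M+i)]) ω + W ω := by
      rw [e1]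
      simp only [Pi.add_apply, h3]
      rw [e2]
    rw [e4]
    -- now pure arithmetic
    set cx := (μ[X (M+i+1)|F (M+i)]) ω with hcx
    set a := αseq (M+i) with ha
    set ρ := r (M+i) with hρ
    set x := X (M+i) ω with hxv
    have t1 : cx ≤ (1 - c₀*a + C'*ρ)*x + C'*ρ := by
      have m1 : 0 ≤ (C'-C₀)*ρ*x :=
        mul_nonneg (mul_nonneg (sub_nonneg.2 hC0C') (hr0 _)) hx
      have m2 : 0 ≤ (C'-C₀)*ρ := mul_nonneg (sub_nonneg.2 hC0C') (hr0 _)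
      nlinarith [hd]
    have t2 : q (M+i+1) * cx ≤ q (M+i+1) * ((1 - c₀*a + C'*ρ)*x + C'*ρ) :=
      mul_le_mul_of_nonneg_left t1 (hq_pos _).le
    have t3 : (q (M+i+1) * (1 - c₀*a + C'*ρ)) * x
        ≤ (q (M+i) * (1 - c₀/2*a)) * x :=
      mul_le_mul_of_nonneg_right hk2 hx
    have hbi : b i = q (M+i+1) * (C' * ρ) := rfl
    simp only [hfdef, hWdef, Finset.sum_range_succ]
    linarith [t2, t3]
  have hsup : Supermartingale f G μ := supermartingale_nat hfadp hfint hcond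
  have hX0 : ∀ᵐ ω ∂μ, ∀ n, 0 ≤ X n ω := ae_all_iff.2 hnonneg
  have hf0 : ∀ n, 0 ≤ᵐ[μ] f n := by
    intro n
    filter_upwards [hX0] with ω hω
    have p1 : 0 ≤ q (M+n) * X (M+n) ω := mul_nonneg (hq_pos _).le (hω _)
    have p2 : 0 ≤ ∑ k ∈ Finset.range n, (c₀/2 * αseq (M+k) * q (M+k)) * X (M+k) ω :=
      Finset.sum_nonneg fun k _ => mul_nonneg
        (mul_nonneg (mul_nonneg (by linarith) (hα_pos _).le) (hq_pos _).le) (hω _)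
    have p3 : 0 ≤ B - ∑ k ∈ Finset.range n, b k := sub_nonneg.2 (hTB n)
    simp only [hfdef, Pi.zero_apply]
    linarith
  have hExp : ∀ n, ∫ ω, f n ω ∂μ ≤ ∫ ω, f 0 ω ∂μ := by
    intro n
    have h := hsup.2.1 0 n (Nat.zero_le n)
    calc ∫ ω, f n ω ∂μ = ∫ ω, (μ[f n|G 0]) ω ∂μ := (integral_condExp (G.le 0)).symm
      _ ≤ ∫ ω, f 0 ω ∂μ := integral_mono_ae integrable_condExp (hfint 0) h
  have hbdd : ∀ n, eLpNorm ((-f) n) 1 μ ≤ ENNReal.ofReal (∫ ω, f 0 ω ∂μ) := by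
    intro n
    have hneg : (-f) n = -(f n) := rfl
    rw [hneg, eLpNorm_neg, eLpNorm_one_eq_lintegral_enorm,
      ← ofReal_integral_norm_eq_lintegral_enorm (hfint n)]
    apply ENNReal.ofReal_le_ofReal
    have : ∫ ω, ‖f n ω‖ ∂μ = ∫ ω, f n ω ∂μ := by
      apply integral_congr_ae
      filter_upwards [hf0 n] with ω hω
      exact Real.norm_of_nonneg hω
    rw [this]
    exact hExp n
  have hconv := hsup.neg.exists_ae_tendsto_of_bdd hbdd
  have hT : Tendsto (fun n => ∑ k ∈ Finset.range n, b k) atTop (nhds B) :=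
    hbsum.hasSum.tendsto_sum_nat
  filter_upwards [hconv, hX0] with ω hc hω
  obtain ⟨cneg, hcneg⟩ := hc
  have hfc : Tendsto (fun n => f n ω) atTop (nhds (-cneg)) := by
    have := hcneg.neg
    simpa using this
  set Y : ℕ → ℝ := fun n => q (M+n) * X (M+n) ω with hYdef
  set P : ℕ → ℝ := fun n =>
    ∑ k ∈ Finset.range n, (c₀/2 * αseq (M+k) * q (M+k)) * X (M+k) ω with hPdef
  have hfY : ∀ n, f n ω = Y n + P n + (B - ∑ k ∈ Finset.range n, b k) := fun n => by
    simp only [hfdef, hYdef, hPdef]; ring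
  have hg : Tendsto (fun n => Y n + P n) atTop (nhds (-cneg)) := by
    have h5 : Tendsto (fun n => B - ∑ k ∈ Finset.range n, b k) atTop (nhds 0) := by
      have := (tendsto_const_nhds (x := B) (f := atTop)).sub hT
      simpa using this
    have h6 := hfc.sub h5
    have h7 : (fun n => f n ω - (B - ∑ k ∈ Finset.range n, b k))
        = fun n => Y n + P n := by
      funext n; rw [hfY n]; ring
    rw [h7] at h6
    simpa using h6
  have hY0 : ∀ n, 0 ≤ Y n := fun n => mul_nonneg (hq_pos _).le (hω _)
  have hterm0 : ∀ k, 0 ≤ (c₀/2 * αseq (M+k) * q (M+k)) * X (M+k) ω := fun k =>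
    mul_nonneg (mul_nonneg (mul_nonneg (by linarith) (hα_pos _).le) (hq_pos _).le) (hω _)
  have hPmono : Monotone P := monotone_nat_of_le_succ fun n => by
    simp only [hPdef, Finset.sum_range_succ]
    linarith [hterm0 n]
  have hPbdd : BddAbove (Set.range P) := by
    obtain ⟨A, hA⟩ := hg.bddAbove_range
    refine ⟨A, ?_⟩
    rintro _ ⟨n, rfl⟩
    have h8 : Y n + P n ≤ A := hA ⟨n, rfl⟩
    linarith [hY0 n]
  have hPconv : Tendsto P atTop (nhds (⨆ n, P n)) := tendsto_atTop_ciSup hPmono hPbdd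
  set p := ⨆ n, P n with hpdef
  have hYL : Tendsto Y atTop (nhds (-cneg - p)) := by
    have h9 := hg.sub hPconv
    have h10 : (fun n => (Y n + P n) - P n) = Y := by funext n; ring
    rw [h10] at h9
    exact h9
  set L := -cneg - p with hLdef
  have hL0 : 0 ≤ L := ge_of_tendsto' hYL hY0
  have hLne : ¬ 0 < L := by
    intro hL
    have hPle : ∀ n, P n ≤ p := fun n => le_ciSup hPbdd n
    have hsumg : Summable (fun k => (c₀/2 * αseq (M+k) * q (M+k)) * X (M+k) ω) :=
      summable_of_sum_range_le hterm0 hPle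
    have hevY := hYL.eventually_const_lt (show L/2 < L by linarith)
    obtain ⟨k₀, hk₀⟩ := eventually_atTop.1 hevY
    have hs1 : Summable (fun j : ℕ =>
        (c₀/2 * αseq (M+(j+k₀)) * q (M+(j+k₀))) * X (M+(j+k₀)) ω) :=
      (summable_nat_add_iff (f := fun k : ℕ => (c₀/2 * αseq (M+k) * q (M+k)) * X (M+k) ω) k₀).2 hsumg
    have hs2 : Summable (fun j : ℕ => c₀/2 * (L/2) * αseq (M+(j+k₀))) := by
      refine Summable.of_nonneg_of_le (fun j => ?_) (fun j => ?_) hs1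
      · have := (hα_pos (M+(j+k₀))).le
        positivity
      · have h8 : L/2 ≤ Y (j+k₀) := (hk₀ (j+k₀) (Nat.le_add_left _ _)).le
        have hcoef : 0 ≤ c₀/2 * αseq (M+(j+k₀)) :=
          mul_nonneg (by linarith) (hα_pos _).le
        have h9 : (c₀/2 * αseq (M+(j+k₀))) * (L/2)
            ≤ (c₀/2 * αseq (M+(j+k₀))) * Y (j+k₀) :=
          mul_le_mul_of_nonneg_left h8 hcoef
        have h11 : Y (j+k₀) = q (M+(j+k₀)) * X (M+(j+k₀)) ω := rfl
        rw [h11] at h9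
        linarith [h9]
    have hs3 : Summable (fun j : ℕ => αseq (M+(j+k₀))) := by
      have hcne : (c₀/2 * (L/2)) ≠ 0 := by positivity
      exact (summable_mul_left_iff hcne).1 (hs2.congr fun j => by ring)
    have hs4 : Summable (fun j : ℕ => αseq (j + (M+k₀))) :=
      hs3.congr fun j => congrArg αseq (by omega)
    have hs5 : Summable αseq := (summable_nat_add_iff (f := αseq) (M+k₀)).1 hs4
    have hs6 : Summable (fun n : ℕ => ((n:ℝ)+1)^(-η)) := by
      have h10 : Summable (fun n : ℕ => α * ((n:ℝ)+1)^(-η)) := by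
        refine hs5.congr fun n => ?_
        rw [hαdef, Real.rpow_neg (by positivity)]
        ring
      exact (summable_mul_left_iff hα.ne').1 h10
    exact notsumrpow (-η) (by linarith) hs6
  have hLz : L = 0 := le_antisymm (not_lt.1 hLne) hL0
  rw [hLz] at hYL
  have final : Tendsto (fun n : ℕ => q n * X n ω) atTop (nhds 0) := by
    rw [← tendsto_add_atTop_iff_nat M]
    refine hYL.congr fun n => ?_
    simp only [hYdef]
    rw [show M + n = n + M from by omega]
  exact Tendsto.congr (fun n => by simp only [hqdef]) final
end

section
/- Let α_n = α/(n+1) with α > 0 (i.e., η = 1), and let {X_n} be a nonnegative adapted integrable process satisfying, for all n beyond a deterministic index, E[X_{n+1} | F_n] ≤ (1 − c₀α_n + C₀ r_n) X_n + C₀ r_n with r_n = α_n² + |α_{n+1} − α_n|, c₀ > 0, C₀ < ∞. Then for every 0 ≤ ζ < min{1, c₀α}, (n+1)^ζ X_n → 0 almost surely. -/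
open MeasureTheory Filter

/-- Elementary Bernoulli-type inequality used for the weight ratio estimate. -/
lemma pldr_key_ineq {p K A x g : ℝ} (hp0 : 0 ≤ p) (hp1 : p ≤ 1) (hK : 0 ≤ K)
    (hx0 : 0 < x) (hx1 : x ≤ 1) (hgap : (K + p * K) * x ≤ A - p)
    (hg0 : 0 ≤ g) (hg : g ≤ 1 - A * x + K * x ^ 2) :
    (1 + x) ^ p * g ≤ 1 := by
  have hb : (1 + x) ^ p ≤ 1 + p * x :=
    rpow_one_add_le_one_add_mul_self (by linarith) hp0 hp1
  have h2 : (1 + x) ^ p * g ≤ (1 + p * x) * (1 - A * x + K * x ^ 2) :=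
    mul_le_mul hb hg hg0 (by positivity)
  have hAp : 0 ≤ A - p := le_trans (by positivity) hgap
  nlinarith [mul_le_mul_of_nonneg_right hgap hx0.le,
    mul_nonneg (mul_nonneg (mul_nonneg hp0 hK) (mul_pos hx0 hx0).le) (sub_nonneg.mpr hx1),
    mul_nonneg (mul_nonneg hp0 hAp) (mul_pos hx0 hx0).le,
    sq_nonneg (p * x)]

/-- An eventually-decreasing-in-conditional-expectation nonnegative process converges a.s. -/
lemma pldr_conv {Ω : Type*} {m0 : MeasurableSpace Ω} {μ : Measure Ω} [IsProbabilityMeasure μ]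
    (F : Filtration ℕ m0) (Z : ℕ → Ω → ℝ) (N₁ : ℕ)
    (hadp : ∀ n, StronglyMeasurable[F n] (Z n))
    (hintZ : ∀ n, Integrable (Z n) μ)
    (hnn : ∀ n, ∀ᵐ ω ∂μ, 0 ≤ Z n ω)
    (hdec : ∀ n, N₁ ≤ n → μ[Z (n + 1) | F n] ≤ᵐ[μ] Z n) :
    ∀ᵐ ω ∂μ, ∃ c, Tendsto (fun n => Z n ω) atTop (nhds c) := by
  set G : Filtration ℕ m0 :=
    ⟨fun n => F (N₁ + n), fun i j hij => F.mono (by omega), fun n => F.le _⟩ with hG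
  set f : ℕ → Ω → ℝ := fun n => Z (N₁ + n) with hf
  have hsup : Supermartingale f G μ := by
    refine supermartingale_nat (fun n => hadp (N₁ + n)) (fun n => hintZ (N₁ + n)) fun n => ?_
    exact hdec (N₁ + n) (Nat.le_add_right _ _)
  -- L¹ bound via the integral of `f 0`
  have key : ∀ m, eLpNorm (f m) 1 μ = ENNReal.ofReal (∫ ω, f m ω ∂μ) := by
    intro m
    rw [eLpNorm_one_eq_lintegral_enorm,
      ← ofReal_integral_norm_eq_lintegral_enorm (hintZ (N₁ + m))]
    congr 1
    refine integral_congr_ae ?_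
    filter_upwards [hnn (N₁ + m)] with ω hω
    simp [Real.norm_eq_abs, abs_of_nonneg hω, hf]
  set R : NNReal := (eLpNorm (f 0) 1 μ).toNNReal with hR
  have hRfin : eLpNorm (f 0) 1 μ ≠ ⊤ :=
    ((memLp_one_iff_integrable.mpr (hintZ N₁)).eLpNorm_lt_top).ne
  have hbdd : ∀ n, eLpNorm ((-f) n) 1 μ ≤ (R : ENNReal) := by
    intro n
    have h1 : eLpNorm ((-f) n) 1 μ = eLpNorm (f n) 1 μ := by
      simpa using eLpNorm_neg (f n) 1 μ
    have hle : ∫ ω, f n ω ∂μ ≤ ∫ ω, f 0 ω ∂μ := by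
      have := hsup.setIntegral_le (Nat.zero_le n) (MeasurableSet.univ)
      simpa [setIntegral_univ] using this
    rw [h1, key n, hR, ENNReal.coe_toNNReal hRfin, key 0]
    exact ENNReal.ofReal_le_ofReal hle
  have hsub : Submartingale (-f) G μ := hsup.neg
  filter_upwards [hsub.exists_ae_tendsto_of_bdd hbdd] with ω hc
  obtain ⟨c, hc⟩ := hc
  have hc' : Tendsto (fun n => f n ω) atTop (nhds (-c)) := by
    have := hc.neg
    simpa using this
  refine ⟨-c, ?_⟩
  have h2 : Tendsto (fun n => Z (n + N₁) ω) atTop (nhds (-c)) := by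
    refine hc'.congr fun n => ?_
    simp [hf, Nat.add_comm]
  exact (tendsto_add_atTop_iff_nat N₁).1 h2

/-- Power-law drift rate lemma (harmonic case `η = 1`):
if `E[X_{n+1}|F_n] ≤ (1 − c₀α_n + C₀r_n)X_n + C₀r_n` for all `n` beyond a
deterministic index, with `α_n = α/(n+1)` and `r_n = α_n² + |α_{n+1}−α_n|`,
then `(n+1)^ζ X_n → 0` a.s. for every `0 ≤ ζ < min{1, c₀α}`. -/
theorem power_law_drift_rate_harmonic
    {Ω : Type*} {m0 : MeasurableSpace Ω} {μ : Measure Ω} [IsProbabilityMeasure μ]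
    (F : Filtration ℕ m0) (X : ℕ → Ω → ℝ)
    (α c₀ C₀ : ℝ) (hα : 0 < α) (hc₀ : 0 < c₀)
    (αseq r : ℕ → ℝ)
    (hαdef : ∀ n : ℕ, αseq n = α / ((n : ℝ) + 1))
    (hrdef : ∀ n : ℕ, r n = (αseq n) ^ 2 + |αseq (n + 1) - αseq n|)
    (hadapted : Adapted F X)
    (hnonneg : ∀ n, ∀ᵐ ω ∂μ, 0 ≤ X n ω)
    (hint : ∀ n, Integrable (X n) μ)
    (N : ℕ)
    (hdrift : ∀ n, N ≤ n →
      ∀ᵐ ω ∂μ, (μ[X (n + 1) | F n]) ω ≤ (1 - c₀ * αseq n + C₀ * r n) * X n ω + C₀ * r n) :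
    ∀ ζ : ℝ, 0 ≤ ζ → ζ < min 1 (c₀ * α) →
      ∀ᵐ ω ∂μ, Tendsto (fun n : ℕ => ((n : ℝ) + 1) ^ ζ * X n ω) atTop (nhds 0) := by
  intro ζ hζ0 hζ
  have hMpos : 0 < min 1 (c₀ * α) := lt_min one_pos (by positivity)
  set p : ℝ := (ζ + min 1 (c₀ * α)) / 2 with hp
  have hζp : ζ < p := by rw [hp]; linarith
  have hp0 : 0 < p := by rw [hp]; linarith
  have hp1 : p < 1 := by
    have h1 := min_le_left 1 (c₀ * α)
    rw [hp]; linarith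
  have hpA : p < c₀ * α := by
    have h1 := min_le_right 1 (c₀ * α)
    rw [hp]; linarith
  -- the weights
  set w : ℕ → ℝ := fun n => ((n : ℝ) + 1) ^ p with hw
  have hwpos : ∀ n, 0 < w n := fun n => Real.rpow_pos_of_pos (by positivity) p
  -- bound on the remainder term
  set K : ℝ := max C₀ 0 * (α ^ 2 + α) with hK
  have hK0 : 0 ≤ K := mul_nonneg (le_max_right _ _) (by positivity)
  have hr0 : ∀ n, 0 ≤ r n := by
    intro n; rw [hrdef]; positivity
  have hrb : ∀ n : ℕ, C₀ * r n ≤ K / ((n : ℝ) + 1) ^ 2 := by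
    intro n
    have hn1 : (0 : ℝ) < (n : ℝ) + 1 := by positivity
    have hn2 : (0 : ℝ) < (n : ℝ) + 2 := by positivity
    have h1 : C₀ * r n ≤ max C₀ 0 * r n :=
      mul_le_mul_of_nonneg_right (le_max_left _ _) (hr0 n)
    have h2 : r n ≤ (α ^ 2 + α) / ((n : ℝ) + 1) ^ 2 := by
      rw [hrdef, hαdef, hαdef]
      push_cast
      have ha : α / ((n : ℝ) + 1 + 1) ≤ α / ((n : ℝ) + 1) := by
        gcongr <;> linarith
      rw [abs_of_nonpos (by linarith)]
      have heq : -(α / ((n : ℝ) + 1 + 1) - α / ((n : ℝ) + 1)) =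
          α / (((n : ℝ) + 1) * ((n : ℝ) + 2)) := by
        field_simp
        ring
      rw [heq]
      have h3 : α / (((n : ℝ) + 1) * ((n : ℝ) + 2)) ≤ α / (((n : ℝ) + 1) ^ 2) := by
        gcongr <;> nlinarith
      have h4 : (α / ((n : ℝ) + 1)) ^ 2 = α ^ 2 / ((n : ℝ) + 1) ^ 2 := by
        rw [div_pow]
      have h5 : (α ^ 2 + α) / ((n : ℝ) + 1) ^ 2 =
          α ^ 2 / ((n : ℝ) + 1) ^ 2 + α / ((n : ℝ) + 1) ^ 2 := by
        rw [add_div]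
      rw [h4, h5]
      linarith
    calc C₀ * r n ≤ max C₀ 0 * r n := h1
      _ ≤ max C₀ 0 * ((α ^ 2 + α) / ((n : ℝ) + 1) ^ 2) :=
          mul_le_mul_of_nonneg_left h2 (le_max_right _ _)
      _ = K / ((n : ℝ) + 1) ^ 2 := by rw [hK, mul_div_assoc]
  -- the additive error sequence and its tails
  set b : ℕ → ℝ := fun n => w (n + 1) * (K / ((n : ℝ) + 1) ^ 2) with hb
  have hb0 : ∀ n, 0 ≤ b n := by
    intro n
    exact mul_nonneg (hwpos _).le (by positivity)
  have hwcast : ∀ n : ℕ, w (n + 1) = ((n : ℝ) + 2) ^ p := by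
    intro n
    have hc1 : ((n + 1 : ℕ) : ℝ) + 1 = (n : ℝ) + 2 := by push_cast; ring
    simp only [hw]
    rw [hc1]
  have hbsum : Summable b := by
    have h1 : Summable (fun n : ℕ => ((n : ℝ)) ^ (p - 2)) :=
      Real.summable_nat_rpow.mpr (by linarith)
    have h2 : Summable (fun n : ℕ => ((n : ℝ) + 1) ^ (p - 2)) := by
      have h3 := (summable_nat_add_iff 1).mpr h1
      refine h3.congr fun n => ?_
      push_cast
      ring_nf
    have hcomp : Summable (fun n : ℕ => (2 : ℝ) ^ p * K * ((n : ℝ) + 1) ^ (p - 2)) :=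
      h2.mul_left _
    refine Summable.of_nonneg_of_le hb0 (fun n => ?_) hcomp
    have hn1 : (0 : ℝ) < (n : ℝ) + 1 := by positivity
    have h3 : ((n : ℝ) + 2) ^ p ≤ (2 * ((n : ℝ) + 1)) ^ p :=
      Real.rpow_le_rpow (by positivity) (by linarith) hp0.le
    have h4 : (2 * ((n : ℝ) + 1)) ^ p = 2 ^ p * ((n : ℝ) + 1) ^ p :=
      Real.mul_rpow (by norm_num) (by positivity)
    have h5 : (2 : ℝ) ^ p * ((n : ℝ) + 1) ^ p * (K / ((n : ℝ) + 1) ^ 2) =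
        2 ^ p * K * ((n : ℝ) + 1) ^ (p - 2) := by
      rw [Real.rpow_sub hn1, show (2 : ℝ) = ((2 : ℕ) : ℝ) by norm_num, Real.rpow_natCast]
      field_simp
    calc b n = ((n : ℝ) + 2) ^ p * (K / ((n : ℝ) + 1) ^ 2) := by
          simp only [hb]; rw [hwcast n]
      _ ≤ (2 * ((n : ℝ) + 1)) ^ p * (K / ((n : ℝ) + 1) ^ 2) :=
          mul_le_mul_of_nonneg_right h3 (by positivity)
      _ = 2 ^ p * K * ((n : ℝ) + 1) ^ (p - 2) := by rw [h4]; exact h5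
  set T : ℕ → ℝ := fun n => ∑' k, b (n + k) with hT
  have hTsummable : ∀ n, Summable fun k => b (n + k) := by
    intro n
    exact ((summable_nat_add_iff n).mpr hbsum).congr fun k => congrArg b (Nat.add_comm k n)
  have hT0 : ∀ n, 0 ≤ T n := fun n => tsum_nonneg fun k => hb0 _
  have hTrec : ∀ n, T n = b n + T (n + 1) := by
    intro n
    have h1 := Summable.tsum_eq_zero_add (hTsummable n)
    rw [hT]
    refine h1.trans ?_
    rw [Nat.add_zero]
    congr 1
    exact tsum_congr fun k => congrArg b (by omega)
  have hTtend : Tendsto T atTop (nhds 0) := by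
    have h := tendsto_sum_nat_add b
    refine h.congr fun i => tsum_congr fun k => congrArg b (Nat.add_comm k i)
  -- the candidate supermartingale
  set Z : ℕ → Ω → ℝ := fun n ω => w n * X n ω + T n with hZ
  have hZadp : ∀ n, StronglyMeasurable[F n] (Z n) := by
    intro n
    exact (((hadapted n).const_mul _).add_const _).stronglyMeasurable
  have hZint : ∀ n, Integrable (Z n) μ := by
    intro n
    exact ((hint n).const_mul (w n)).add (integrable_const (T n))
  have hZnn : ∀ n, ∀ᵐ ω ∂μ, 0 ≤ Z n ω := by
    intro n
    filter_upwards [hnonneg n] with ω hω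
    exact add_nonneg (mul_nonneg (hwpos n).le hω) (hT0 n)
  -- choose the deterministic threshold
  obtain ⟨M, hM⟩ := exists_nat_gt ((K + p * K) / (c₀ * α - p))
  have hkey : ∀ n, M ≤ n → w (n + 1) * (1 - c₀ * αseq n + C₀ * r n) ≤ w n := by
    intro n hn
    have hn1 : (0 : ℝ) < (n : ℝ) + 1 := by positivity
    set x : ℝ := 1 / ((n : ℝ) + 1) with hx
    have hx0 : 0 < x := by positivity
    have hx1 : x ≤ 1 := by
      rw [hx, div_le_one hn1]; linarith
    have hδ : 0 < c₀ * α - p := by linarith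
    have hgap : (K + p * K) * x ≤ c₀ * α - p := by
      have hMn : (K + p * K) / (c₀ * α - p) < (n : ℝ) + 1 := by
        refine lt_of_lt_of_le hM ?_
        have : (M : ℝ) ≤ (n : ℝ) := by exact_mod_cast hn
        linarith
      rw [div_lt_iff₀ hδ] at hMn
      rw [hx, mul_one_div, div_le_iff₀ hn1]
      nlinarith
    rcases le_or_gt 0 (1 - c₀ * αseq n + C₀ * r n) with hg0 | hg0
    · have hg : 1 - c₀ * αseq n + C₀ * r n ≤ 1 - (c₀ * α) * x + K * x ^ 2 := by
        have h1 : c₀ * αseq n = (c₀ * α) * x := by rw [hαdef, hx]; ring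
        have h2 : C₀ * r n ≤ K * x ^ 2 := by
          refine (hrb n).trans_eq ?_
          rw [hx]
          field_simp
        linarith
      have hkey1 : (1 + x) ^ p * (1 - c₀ * αseq n + C₀ * r n) ≤ 1 :=
        pldr_key_ineq hp0.le hp1.le hK0 hx0 hx1 hgap hg0 hg
      have hwsplit : w (n + 1) = w n * (1 + x) ^ p := by
        have hbase : (n : ℝ) + 2 = ((n : ℝ) + 1) * (1 + x) := by
          rw [hx]; field_simp; ring
        rw [hwcast n, hbase, Real.mul_rpow hn1.le (by positivity)]
      calc w (n + 1) * (1 - c₀ * αseq n + C₀ * r n)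
          = w n * ((1 + x) ^ p * (1 - c₀ * αseq n + C₀ * r n)) := by rw [hwsplit]; ring
        _ ≤ w n * 1 := mul_le_mul_of_nonneg_left hkey1 (hwpos n).le
        _ = w n := mul_one _
    · have h1 : w (n + 1) * (1 - c₀ * αseq n + C₀ * r n) ≤ 0 :=
        mul_nonpos_iff.mpr (Or.inl ⟨(hwpos _).le, hg0.le⟩)
      exact h1.trans (hwpos n).le
  -- the supermartingale property beyond max N M
  have hsuper : ∀ n, max N M ≤ n → μ[Z (n + 1) | F n] ≤ᵐ[μ] Z n := by
    intro n hn
    have hcond : μ[Z (n + 1) | F n] =ᵐ[μ]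
        fun ω => w (n + 1) * (μ[X (n + 1) | F n]) ω + T (n + 1) := by
      have e1 : Z (n + 1) = (w (n + 1) • X (n + 1)) + (fun _ : Ω => T (n + 1)) := rfl
      rw [e1]
      have hsm : Integrable (w (n + 1) • X (n + 1)) μ := by
        exact (hint (n + 1)).const_mul (w (n + 1))
      have h2 := condExp_add (μ := μ) (m := F n) hsm (integrable_const (T (n + 1)))
      have h3 := condExp_smul (μ := μ) (m := F n) (w (n + 1)) (X (n + 1))
      have h4 : μ[(fun _ : Ω => T (n + 1)) | F n] = fun _ => T (n + 1) :=
        condExp_const (F.le n) _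
      refine h2.trans ?_
      rw [h4]
      filter_upwards [h3] with ω hω
      simp only [Pi.add_apply, hω, Pi.smul_apply, smul_eq_mul]
    filter_upwards [hcond, hdrift n (le_trans (le_max_left N M) hn), hnonneg n]
      with ω h1 h2 h3
    rw [h1]
    have hw1 : (0 : ℝ) ≤ w (n + 1) := (hwpos _).le
    have hstep1 : w (n + 1) * (μ[X (n + 1) | F n]) ω + T (n + 1) ≤
        w (n + 1) * ((1 - c₀ * αseq n + C₀ * r n) * X n ω + C₀ * r n) + T (n + 1) := by
      have := mul_le_mul_of_nonneg_left h2 hw1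
      linarith
    have ha := mul_le_mul_of_nonneg_right (hkey n (le_trans (le_max_right N M) hn)) h3
    have hbb : w (n + 1) * (C₀ * r n) ≤ b n :=
      mul_le_mul_of_nonneg_left (hrb n) hw1
    have hstep2 : w (n + 1) * ((1 - c₀ * αseq n + C₀ * r n) * X n ω + C₀ * r n) + T (n + 1) ≤
        w n * X n ω + T n := by
      rw [hTrec n]
      nlinarith [ha, hbb]
    exact le_trans hstep1 hstep2
  -- almost sure convergence of `Z`
  have hconv := pldr_conv F Z (max N M) hZadp hZint hZnn hsuper
  filter_upwards [hconv] with ω hc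
  obtain ⟨c, hc⟩ := hc
  have hXc : Tendsto (fun n => w n * X n ω) atTop (nhds c) := by
    have he : (fun n => w n * X n ω) = fun n => Z n ω - T n := by
      funext n
      rw [hZ]
      ring
    rw [he]
    simpa using hc.sub hTtend
  have hfac : Tendsto (fun n : ℕ => ((n : ℝ) + 1) ^ (ζ - p)) atTop (nhds 0) := by
    have h1 : Tendsto (fun n : ℕ => (n : ℝ) + 1) atTop atTop :=
      tendsto_atTop_add_const_right _ 1 tendsto_natCast_atTop_atTop
    have h2 := tendsto_rpow_neg_atTop (show (0 : ℝ) < p - ζ by linarith)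
    have h3 := h2.comp h1
    simpa [neg_sub, Function.comp_def] using h3
  have hmul : Tendsto (fun n : ℕ => ((n : ℝ) + 1) ^ (ζ - p) * (w n * X n ω)) atTop
      (nhds (0 * c)) := hfac.mul hXc
  rw [zero_mul] at hmul
  refine hmul.congr fun n => ?_
  rw [hw]
  rw [← mul_assoc, ← Real.rpow_add (by positivity)]
  congr 2
  ring
end

section
/- For ξ > 0 and an arbitrary norm ‖·‖ on ℝ^d satisfying ℓ‖x‖₂ ≤ ‖x‖ ≤ u‖x‖₂, there exists a norm ‖·‖_{m,ξ} on ℝ^d such that M_ξ(x) = ½‖x‖_{m,ξ}² for all x, and with ℓ_ξ = √(1+ξℓ²), u_ξ = √(1+ξu²), one has ℓ_ξ‖x‖_{m,ξ} ≤ ‖x‖ ≤ u_ξ‖x‖_{m,ξ} for all x ∈ ℝ^d. -/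
/-!
`M_ξ` is the infimal convolution of the convex functions `½ N²` and `‖·‖₂² / (2ξ)`, hence convex,
and it is `2`-homogeneous because both of them are. The square root of a nonnegative, convex,
`2`-homogeneous function is subadditive, so `‖x‖_{m,ξ} = √(2 M_ξ x)` is a norm. The two bounds
compare `M_ξ` with the explicit envelopes of `½ (ℓ ‖·‖₂)²` and `½ (u ‖·‖₂)²`: testing
`v = x / (1 + ξℓ²)` gives the upper bound on `M_ξ`, and Cauchy–Schwarz applied to
`N x ≤ N v + u ‖x - v‖₂` gives the lower one.
-/

open Set

variable {E F : Type*}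

theorem ConvexOn.ciInf_snd [AddCommGroup E] [Module ℝ E] [AddCommGroup F] [Module ℝ F]
    [Nonempty F] {g : E × F → ℝ} (hg : ConvexOn ℝ univ g)
    (hbdd : ∀ x, BddBelow (range fun v => g (x, v))) :
    ConvexOn ℝ univ fun x => ⨅ v, g (x, v) := by
  refine ⟨convex_univ, fun x _ y _ a b ha hb hab => le_of_forall_pos_le_add fun ε hε => ?_⟩
  obtain ⟨v, hv⟩ := exists_lt_of_ciInf_lt (lt_add_of_pos_right (⨅ v, g (x, v)) hε)
  obtain ⟨w, hw⟩ := exists_lt_of_ciInf_lt (lt_add_of_pos_right (⨅ w, g (y, w)) hε)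
  calc ⨅ z, g (a • x + b • y, z) ≤ g (a • (x, v) + b • (y, w)) :=
        ciInf_le (hbdd _) (a • v + b • w)
    _ ≤ a * g (x, v) + b * g (y, w) := hg.2 trivial trivial ha hb hab
    _ ≤ a * ((⨅ v, g (x, v)) + ε) + b * ((⨅ w, g (y, w)) + ε) := by gcongr
    _ = a • (⨅ v, g (x, v)) + b • (⨅ w, g (y, w)) + ε := by
      simp only [smul_eq_mul]; linear_combination ε * hab

theorem sqrt_add_le_of_convexOn_of_sq_homogeneous [AddCommGroup E] [Module ℝ E] {q : E → ℝ}
    (hq : ConvexOn ℝ univ q) (hq0 : ∀ x, 0 ≤ q x) (hsmul : ∀ (c : ℝ) x, q (c • x) = c ^ 2 * q x)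
    (hdef : ∀ x, q x = 0 → x = 0) (x y : E) :
    √(q (x + y)) ≤ √(q x) + √(q y) := by
  rcases (Real.sqrt_nonneg (q x)).eq_or_lt with ha | ha
  · rw [hdef x ((Real.sqrt_eq_zero (hq0 x)).1 ha.symm), zero_add]
    exact le_add_of_nonneg_left (Real.sqrt_nonneg _)
  rcases (Real.sqrt_nonneg (q y)).eq_or_lt with hb | hb
  · rw [hdef y ((Real.sqrt_eq_zero (hq0 y)).1 hb.symm), add_zero]
    exact le_add_of_nonneg_right (Real.sqrt_nonneg _)
  set a := √(q x)
  set b := √(q y)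
  have hx : q (a⁻¹ • x) = 1 := by
    rw [hsmul, inv_pow, Real.sq_sqrt (hq0 x), inv_mul_cancel₀ (Real.sqrt_pos.1 ha).ne']
  have hy : q (b⁻¹ • y) = 1 := by
    rw [hsmul, inv_pow, Real.sq_sqrt (hq0 y), inv_mul_cancel₀ (Real.sqrt_pos.1 hb).ne']
  -- `x + y` is `a + b` times a convex combination of the unit vectors `a⁻¹ • x` and `b⁻¹ • y`
  have hxy : x + y = (a + b) • ((a / (a + b)) • (a⁻¹ • x) + (b / (a + b)) • (b⁻¹ • y)) := by
    rw [smul_add, smul_smul, smul_smul, smul_smul, smul_smul]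
    congr 1 <;> [convert (one_smul ℝ x).symm; convert (one_smul ℝ y).symm] <;> field_simp
  refine Real.sqrt_le_iff.2 ⟨by positivity, ?_⟩
  calc q (x + y) ≤ (a + b) ^ 2 * (a / (a + b) * q (a⁻¹ • x) + b / (a + b) * q (b⁻¹ • y)) := by
        rw [hxy, hsmul]
        gcongr
        exact hq.2 trivial trivial (by positivity) (by positivity) (by field_simp)
    _ = (a + b) ^ 2 := by rw [hx, hy]; field_simp

section Moreau

variable [NormedAddCommGroup E] {f : E → ℝ} {ξ : ℝ}

noncomputable def moreauEnvelope (f : E → ℝ) (ξ : ℝ) (x : E) : ℝ :=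
  ⨅ v, f v + ‖x - v‖ ^ 2 / (2 * ξ)

theorem bddBelow_range_moreau (hf : ∀ v, 0 ≤ f v) (hξ : 0 ≤ ξ) (x : E) :
    BddBelow (range fun v => f v + ‖x - v‖ ^ 2 / (2 * ξ)) :=
  ⟨0, forall_mem_range.2 fun v => add_nonneg (hf v) (by positivity)⟩

theorem moreauEnvelope_le (hf : ∀ v, 0 ≤ f v) (hξ : 0 ≤ ξ) (x v : E) :
    moreauEnvelope f ξ x ≤ f v + ‖x - v‖ ^ 2 / (2 * ξ) :=
  ciInf_le (bddBelow_range_moreau hf hξ x) v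

theorem moreauEnvelope_nonneg (hf : ∀ v, 0 ≤ f v) (hξ : 0 ≤ ξ) (x : E) :
    0 ≤ moreauEnvelope f ξ x :=
  le_ciInf fun v => add_nonneg (hf v) (by positivity)

theorem ConvexOn.moreauEnvelope [NormedSpace ℝ E] (hf : ConvexOn ℝ univ f) (hf0 : ∀ v, 0 ≤ f v)
    (hξ : 0 ≤ ξ) : ConvexOn ℝ univ (moreauEnvelope f ξ) := by
  have hsq : ConvexOn ℝ univ fun z : E => (2 * ξ)⁻¹ • ‖z‖ ^ 2 :=
    (convexOn_univ_norm.pow (fun _ _ => norm_nonneg _) 2).smul (by positivity)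
  have hjoint := (hf.comp_linearMap (LinearMap.snd ℝ E E)).add
    (hsq.comp_linearMap (LinearMap.fst ℝ E E - LinearMap.snd ℝ E E))
  rw [preimage_univ] at hjoint
  refine ConvexOn.ciInf_snd (g := fun w : E × E => f w.2 + ‖w.1 - w.2‖ ^ 2 / (2 * ξ))
    (hjoint.congr fun w _ => ?_) (bddBelow_range_moreau hf0 hξ)
  simp [div_eq_inv_mul]

theorem moreauEnvelope_smul [NormedSpace ℝ E] (hf0 : ∀ v, 0 ≤ f v)
    (hf : ∀ (c : ℝ) v, f (c • v) = c ^ 2 * f v) (hξ : 0 ≤ ξ) (c : ℝ) (x : E) :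
    moreauEnvelope f ξ (c • x) = c ^ 2 * moreauEnvelope f ξ x := by
  rcases eq_or_ne c 0 with rfl | hc
  · have hf00 : f 0 = 0 := by simpa using hf 0 0
    rw [zero_smul, zero_pow two_ne_zero, zero_mul]
    refine le_antisymm ?_ (moreauEnvelope_nonneg hf0 hξ 0)
    simpa [hf00] using moreauEnvelope_le hf0 hξ 0 0
  · rw [moreauEnvelope, moreauEnvelope, Real.mul_iInf_of_nonneg (sq_nonneg c),
      ← (MulAction.surjective₀ hc).iInf_comp]
    refine iInf_congr fun v => ?_
    rw [hf, ← smul_sub, norm_smul, Real.norm_eq_abs, mul_pow, sq_abs]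
    ring

end Moreau

section MoreauNorm

variable [NormedAddCommGroup E] [NormedSpace ℝ E]

noncomputable def moreauNorm (p : Seminorm ℝ E) (ξ : ℝ) (x : E) : ℝ :=
  √(2 * moreauEnvelope (fun v => p v ^ 2 / 2) ξ x)

variable (p : Seminorm ℝ E) {ξ : ℝ}

theorem moreauEnvelope_half_sq_smul (hξ : 0 ≤ ξ) (c : ℝ) (x : E) :
    moreauEnvelope (fun v => p v ^ 2 / 2) ξ (c • x)
      = c ^ 2 * moreauEnvelope (fun v => p v ^ 2 / 2) ξ x :=
  moreauEnvelope_smul (fun _ => by positivity)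
    (fun c v => by rw [map_smul_eq_mul, Real.norm_eq_abs, mul_pow, sq_abs]; ring) hξ c x

theorem convexOn_moreauEnvelope_half_sq (hξ : 0 ≤ ξ) :
    ConvexOn ℝ univ (moreauEnvelope (fun v => p v ^ 2 / 2) ξ) := by
  refine ConvexOn.moreauEnvelope ?_ (fun _ => by positivity) hξ
  refine ((p.convexOn.pow (fun _ _ => apply_nonneg p _) 2).smul
    (by norm_num : (0 : ℝ) ≤ 1 / 2)).congr fun v _ => ?_
  simp only [Pi.pow_apply, smul_eq_mul]
  ring

theorem sq_le_mul_moreauEnvelope {u : ℝ} (hu : ∀ z, p z ≤ u * ‖z‖) (hξ : 0 < ξ) (x : E) :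
    p x ^ 2 ≤ 2 * (1 + ξ * u ^ 2) * moreauEnvelope (fun v => p v ^ 2 / 2) ξ x := by
  rw [mul_comm, ← div_le_iff₀ (by positivity)]
  refine le_ciInf fun v => ?_
  have htri : p x ≤ p v + u * ‖x - v‖ :=
    calc p x = p (v + (x - v)) := by rw [add_sub_cancel]
      _ ≤ p v + p (x - v) := map_add_le_add p _ _
      _ ≤ p v + u * ‖x - v‖ := add_le_add le_rfl (hu _)
  -- Cauchy–Schwarz for the vectors `(p v, ‖x - v‖ / √ξ)` and `(1, u √ξ)`
  have hcs : (p v + u * ‖x - v‖) ^ 2 ≤ (1 + ξ * u ^ 2) * (p v ^ 2 + ‖x - v‖ ^ 2 / ξ) := by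
    have hgap : (1 + ξ * u ^ 2) * (p v ^ 2 + ‖x - v‖ ^ 2 / ξ) - (p v + u * ‖x - v‖) ^ 2
        = (ξ * u * p v - ‖x - v‖) ^ 2 / ξ := by
      field_simp
      ring
    nlinarith [div_nonneg (sq_nonneg (ξ * u * p v - ‖x - v‖)) hξ.le]
  calc p x ^ 2 / (2 * (1 + ξ * u ^ 2)) ≤ (p v + u * ‖x - v‖) ^ 2 / (2 * (1 + ξ * u ^ 2)) := by
        gcongr
    _ ≤ (1 + ξ * u ^ 2) * (p v ^ 2 + ‖x - v‖ ^ 2 / ξ) / (2 * (1 + ξ * u ^ 2)) := by gcongr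
    _ = p v ^ 2 / 2 + ‖x - v‖ ^ 2 / (2 * ξ) := by field_simp

theorem mul_moreauEnvelope_le_sq {ℓ : ℝ} (hℓ : 0 ≤ ℓ) (hξ : 0 < ξ) {x : E}
    (hx : ℓ * ‖x‖ ≤ p x) :
    2 * (1 + ξ * ℓ ^ 2) * moreauEnvelope (fun v => p v ^ 2 / 2) ξ x ≤ p x ^ 2 := by
  -- `t • x` minimises the envelope of `½ (ℓ ‖·‖)²` at `x`
  set t := (1 + ξ * ℓ ^ 2)⁻¹
  have ht : 0 < t := by positivity
  have ht_mul : t * (1 + ξ * ℓ ^ 2) = 1 := inv_mul_cancel₀ (by positivity)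
  have hdist : ‖x - t • x‖ ≤ ξ * ℓ * t * p x := by
    have h1t : 1 - t = ξ * ℓ * t * ℓ := by linear_combination -ht_mul
    rw [show x - t • x = (1 - t) • x by rw [sub_smul, one_smul], norm_smul, Real.norm_eq_abs,
      abs_of_nonneg (by rw [h1t]; positivity), h1t, mul_assoc]
    gcongr
  calc 2 * (1 + ξ * ℓ ^ 2) * moreauEnvelope (fun v => p v ^ 2 / 2) ξ x
      ≤ 2 * (1 + ξ * ℓ ^ 2) * (p (t • x) ^ 2 / 2 + ‖x - t • x‖ ^ 2 / (2 * ξ)) := by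
        gcongr
        exact moreauEnvelope_le (fun v => by positivity) hξ.le x _
    _ ≤ 2 * (1 + ξ * ℓ ^ 2) * ((t * p x) ^ 2 / 2 + (ξ * ℓ * t * p x) ^ 2 / (2 * ξ)) := by
        rw [map_smul_eq_mul, Real.norm_eq_abs, abs_of_pos ht]
        gcongr
    _ = p x ^ 2 := by
        field_simp
        linear_combination p x ^ 2 * (t * (1 + ξ * ℓ ^ 2) + 1) * ht_mul

theorem eq_zero_of_moreauEnvelope_eq_zero (hp : ∀ x, p x = 0 → x = 0) {u : ℝ}
    (hu : ∀ z, p z ≤ u * ‖z‖) (hξ : 0 < ξ) {x : E}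
    (hx : moreauEnvelope (fun v => p v ^ 2 / 2) ξ x = 0) : x = 0 := by
  have hsq : p x ^ 2 ≤ 0 := by simpa [hx] using sq_le_mul_moreauEnvelope p hu hξ x
  exact hp x (pow_eq_zero_iff two_ne_zero |>.1 (hsq.antisymm (sq_nonneg _)))

theorem sq_moreauNorm (hξ : 0 ≤ ξ) (x : E) :
    moreauNorm p ξ x ^ 2 = 2 * moreauEnvelope (fun v => p v ^ 2 / 2) ξ x :=
  Real.sq_sqrt (mul_nonneg zero_le_two (moreauEnvelope_nonneg (fun _ => by positivity) hξ x))

theorem eq_zero_of_moreauNorm_eq_zero (hp : ∀ x, p x = 0 → x = 0) {u : ℝ}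
    (hu : ∀ z, p z ≤ u * ‖z‖) (hξ : 0 < ξ) {x : E} (hx : moreauNorm p ξ x = 0) : x = 0 := by
  have h := sq_moreauNorm p hξ.le x
  rw [hx] at h
  exact eq_zero_of_moreauEnvelope_eq_zero p hp hu hξ (by linarith)

theorem moreauNorm_smul (hξ : 0 ≤ ξ) (c : ℝ) (x : E) :
    moreauNorm p ξ (c • x) = |c| * moreauNorm p ξ x := by
  rw [moreauNorm, moreauNorm, moreauEnvelope_half_sq_smul p hξ, mul_left_comm,
    Real.sqrt_mul (sq_nonneg c), Real.sqrt_sq_eq_abs]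

theorem moreauNorm_add_le (hp : ∀ x, p x = 0 → x = 0) {u : ℝ} (hu : ∀ z, p z ≤ u * ‖z‖)
    (hξ : 0 < ξ) (x y : E) :
    moreauNorm p ξ (x + y) ≤ moreauNorm p ξ x + moreauNorm p ξ y :=
  sqrt_add_le_of_convexOn_of_sq_homogeneous
    ((convexOn_moreauEnvelope_half_sq p hξ.le).smul zero_le_two)
    (fun x => mul_nonneg zero_le_two (moreauEnvelope_nonneg (fun _ => by positivity) hξ.le x))
    (fun c x => by simp only [smul_eq_mul, moreauEnvelope_half_sq_smul p hξ.le]; ring)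
    (fun x hx => eq_zero_of_moreauEnvelope_eq_zero p hp hu hξ
      ((mul_eq_zero.1 hx).resolve_left two_ne_zero))
    x y

theorem sqrt_mul_moreauNorm_le {ℓ : ℝ} (hℓ : 0 ≤ ℓ) (hξ : 0 < ξ) {x : E}
    (hx : ℓ * ‖x‖ ≤ p x) : √(1 + ξ * ℓ ^ 2) * moreauNorm p ξ x ≤ p x := by
  rw [moreauNorm, ← Real.sqrt_mul (by positivity), Real.sqrt_le_left (apply_nonneg p x)]
  linarith [mul_moreauEnvelope_le_sq p hℓ hξ hx]

theorem le_sqrt_mul_moreauNorm {u : ℝ} (hu : ∀ z, p z ≤ u * ‖z‖) (hξ : 0 < ξ) (x : E) :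
    p x ≤ √(1 + ξ * u ^ 2) * moreauNorm p ξ x := by
  rw [moreauNorm, ← Real.sqrt_mul (by positivity), Real.le_sqrt (apply_nonneg p x) ?_]
  · linarith [sq_le_mul_moreauEnvelope p hu hξ x]
  · exact mul_nonneg (by positivity) (mul_nonneg zero_le_two
      (moreauEnvelope_nonneg (fun _ => by positivity) hξ.le x))

end MoreauNorm

theorem moreau_envelope_is_half_norm_squared_general (d : ℕ)
    (N : EuclideanSpace ℝ (Fin d) → ℝ)
    (ℓ u ξ : ℝ) (hℓ : 0 < ℓ) (hξ : 0 < ξ)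
    (hN_add : ∀ x y, N (x + y) ≤ N x + N y)
    (hN_smul : ∀ (c : ℝ) x, N (c • x) = |c| * N x)
    (hN_def : ∀ x, N x = 0 → x = 0)
    (hequiv : ∀ x, ℓ * ‖x‖ ≤ N x ∧ N x ≤ u * ‖x‖)
    (M : EuclideanSpace ℝ (Fin d) → ℝ)
    (hM : ∀ x, M x = ⨅ v : EuclideanSpace ℝ (Fin d),
      (N v ^ 2 / 2 + ‖x - v‖ ^ 2 / (2 * ξ))) :
    ∃ Nm : EuclideanSpace ℝ (Fin d) → ℝ,
      (∀ x y, Nm (x + y) ≤ Nm x + Nm y) ∧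
      (∀ (c : ℝ) x, Nm (c • x) = |c| * Nm x) ∧
      (∀ x, Nm x = 0 → x = 0) ∧
      (∀ x, M x = Nm x ^ 2 / 2) ∧
      (∀ x, Real.sqrt (1 + ξ * ℓ ^ 2) * Nm x ≤ N x ∧
        N x ≤ Real.sqrt (1 + ξ * u ^ 2) * Nm x) := by
  let p : Seminorm ℝ (EuclideanSpace ℝ (Fin d)) := .of N hN_add fun c x => by
    rw [hN_smul, Real.norm_eq_abs]
  have hupper : ∀ z, p z ≤ u * ‖z‖ := fun z => (hequiv z).2
  obtain rfl : M = moreauEnvelope (fun v => p v ^ 2 / 2) ξ := funext hM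
  refine ⟨moreauNorm p ξ, moreauNorm_add_le p hN_def hupper hξ, moreauNorm_smul p hξ.le,
    fun x => eq_zero_of_moreauNorm_eq_zero p hN_def hupper hξ, fun x => ?_,
    fun x => ⟨sqrt_mul_moreauNorm_le p hℓ.le hξ (hequiv x).1, le_sqrt_mul_moreauNorm p hupper hξ x⟩⟩
  rw [sq_moreauNorm p hξ.le]
  ring

/-- The Moreau envelope `M_ξ` of `½N(·)²` (Euclidean proximal term) is itself half
the square of a norm `‖·‖_{m,ξ}` satisfying
`ℓ_ξ ‖x‖_{m,ξ} ≤ N x ≤ u_ξ ‖x‖_{m,ξ}` with `ℓ_ξ = √(1+ξℓ²)`, `u_ξ = √(1+ξu²)`. -/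
theorem moreau_envelope_is_half_norm_squared (d : ℕ)
    (N : EuclideanSpace ℝ (Fin d) → ℝ)
    (ℓ u ξ : ℝ) (hℓ : 0 < ℓ) (hu : 0 < u) (hξ : 0 < ξ)
    (hN_add : ∀ x y, N (x + y) ≤ N x + N y)
    (hN_smul : ∀ (c : ℝ) x, N (c • x) = |c| * N x)
    (hN_def : ∀ x, N x = 0 → x = 0)
    (hequiv : ∀ x, ℓ * ‖x‖ ≤ N x ∧ N x ≤ u * ‖x‖)
    (M : EuclideanSpace ℝ (Fin d) → ℝ)
    (hM : ∀ x, M x = ⨅ v : EuclideanSpace ℝ (Fin d),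
      (N v ^ 2 / 2 + ‖x - v‖ ^ 2 / (2 * ξ))) :
    ∃ Nm : EuclideanSpace ℝ (Fin d) → ℝ,
      (∀ x y, Nm (x + y) ≤ Nm x + Nm y) ∧
      (∀ (c : ℝ) x, Nm (c • x) = |c| * Nm x) ∧
      (∀ x, Nm x = 0 → x = 0) ∧
      (∀ x, M x = Nm x ^ 2 / 2) ∧
      (∀ x, Real.sqrt (1 + ξ * ℓ ^ 2) * Nm x ≤ N x ∧
        N x ≤ Real.sqrt (1 + ξ * u ^ 2) * Nm x) :=
  moreau_envelope_is_half_norm_squared_general d N ℓ u ξ hℓ hξ hN_add hN_smul hN_def hequiv M hM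
end

section
/- Let μ, α, C > 0 with μα ≠ 1, and suppose a nonnegative sequence v_n satisfies, for all n ≥ N, v_{n+1} ≤ (1 − μα/(n+1) + Cα²/(n+1)²)·v_n + Cα²/(n+1)². Then v_n = O(n^{−min{μα, 1}}). If instead μα = 1, then v_n = O(log n / n). -/
open Filter Asymptotics


lemma ind_bound (v b : ℕ → ℝ) (n₀ : ℕ) (h0 : v n₀ ≤ b n₀)
    (hstep : ∀ n, n₀ ≤ n → v n ≤ b n → v (n+1) ≤ b (n+1)) :
    ∀ n, n₀ ≤ n → v n ≤ b n := by
  intro n hn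
  induction n, hn using Nat.le_induction with
  | base => exact h0
  | succ n hn ih => exact hstep n hn ih

lemma key_rpow (x β : ℝ) (hx : 1 ≤ x) (hβ0 : 0 ≤ β) (hβ1 : β ≤ 1) :
    x ^ (-β) * (1 - β / x) ≤ (x + 1) ^ (-β) := by
  have hx0 : (0:ℝ) < x := lt_of_lt_of_le one_pos hx
  have h1 : (1 + 1/x) ^ β ≤ 1 + β * (1/x) :=
    rpow_one_add_le_one_add_mul_self (le_trans (by norm_num) (by positivity : (0:ℝ) ≤ 1/x)) hβ0 hβ1
  have hxe : x + 1 = x * (1 + 1/x) := by field_simp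
  have h2 : (x+1) ^ β ≤ x ^ β * (1 + β/x) := by
    rw [hxe, Real.mul_rpow hx0.le (by positivity)]
    have := mul_le_mul_of_nonneg_left h1 (Real.rpow_nonneg hx0.le β)
    calc x ^ β * (1 + 1/x) ^ β ≤ x ^ β * (1 + β * (1/x)) := this
      _ = x ^ β * (1 + β/x) := by ring
  have hQ : (0:ℝ) < (x+1) ^ β := Real.rpow_pos_of_pos (by linarith) β
  have hPp : (0:ℝ) < x ^ β := Real.rpow_pos_of_pos hx0 β
  have h3 : ((x+1) ^ β)⁻¹ ≥ (x ^ β * (1 + β/x))⁻¹ := by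
    apply inv_anti₀ hQ h2
  have h4 : (1 - β/x) ≤ (1 + β/x)⁻¹ := by
    have ht : 0 ≤ β/x := by positivity
    rw [inv_eq_one_div, le_div_iff₀ (by linarith)]
    nlinarith
  rw [Real.rpow_neg hx0.le, Real.rpow_neg (by linarith : (0:ℝ) ≤ x+1)]
  calc (x ^ β)⁻¹ * (1 - β/x) ≤ (x ^ β)⁻¹ * (1+β/x)⁻¹ := by
        apply mul_le_mul_of_nonneg_left h4 (by positivity)
    _ = (x ^ β * (1+β/x))⁻¹ := by rw [mul_inv]
    _ ≤ ((x+1) ^ β)⁻¹ := h3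
lemma rho_nonneg (β cc x : ℝ) (hβ : β ≤ x + 1) (hcc : 0 ≤ cc) (hx : 0 < x) :
    0 ≤ 1 - β/(x+1) + cc/(x+1)^2 := by
  have h5 : β/(x+1) ≤ 1 := by rw [div_le_one (by linarith)]; linarith
  have h6 : 0 ≤ cc/(x+1)^2 := by positivity
  linarith

lemma step_gt (β cc K x : ℝ) (hβ1 : 1 < β) (hcc : 0 < cc) (hx1 : 1 ≤ x)
    (hccx : cc/(x+1) ≤ (β-1)/2) (hccK : cc ≤ K*(β-1)/2) (hKpos : 0 < K) :
    (1 - β/(x+1) + cc/(x+1)^2) * (K * (1/x)) + cc/(x+1)^2 ≤ K * (1/(x+1)) := by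
  have hx0 : (0:ℝ) < x := by linarith
  have hxp : (0:ℝ) < x + 1 := by linarith
  have hcore : (1 - β/(x+1) + cc/(x+1)^2) * (1/x) + ((β-1)/2) * (1/(x+1)^2) ≤ 1/(x+1) := by
    have e1 : 1/(x+1) - (1 - β/(x+1) + cc/(x+1)^2) * (1/x)
        = (β-1)/(x*(x+1)) - cc/(x*(x+1)^2) := by
      field_simp
      ring
    have e2a : cc/(x*(x+1)^2) = (cc/(x+1))/(x*(x+1)) := by
      rw [div_div]; congr 1; ring
    have e2 : cc/(x*(x+1)^2) ≤ ((β-1)/2)/(x*(x+1)) := by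
      rw [e2a]
      exact div_le_div_of_nonneg_right hccx (by nlinarith)
    have e3 : ((β-1)/2) * (1/(x+1)^2) ≤ ((β-1)/2) / (x*(x+1)) := by
      rw [mul_one_div]
      apply div_le_div_of_nonneg_left (by linarith) (by nlinarith) (by nlinarith)
    have e4 : (β-1)/(x*(x+1)) = 2*((β-1)/2/(x*(x+1))) := by ring
    linarith
  have hstep2 : cc/(x+1)^2 ≤ K * (((β-1)/2) * (1/(x+1)^2)) := by
    calc cc/(x+1)^2 ≤ (K*(β-1)/2)/(x+1)^2 := div_le_div_of_nonneg_right hccK (by positivity)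
      _ = K * (((β-1)/2) * (1/(x+1)^2)) := by ring
  have := mul_le_mul_of_nonneg_left hcore hKpos.le
  nlinarith [this, hstep2]

lemma case_gt (β cc : ℝ) (hβ1 : 1 < β) (hcc : 0 < cc)
    (v : ℕ → ℝ) (hv : ∀ n, 0 ≤ v n) (N : ℕ)
    (hrec : ∀ n, N ≤ n → v (n+1) ≤ (1 - β/((n:ℝ)+1) + cc/((n:ℝ)+1)^2) * v n + cc/((n:ℝ)+1)^2) :
    (fun n : ℕ => v n) =O[atTop] fun n : ℕ => (n:ℝ) ^ (-(1:ℝ)) := by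
  have hβ0 : 0 < β := by linarith
  have hev : ∀ᶠ n : ℕ in atTop, max (2*cc/(β-1)) β ≤ (n:ℝ) :=
    tendsto_natCast_atTop_atTop.eventually_ge_atTop _
  obtain ⟨n₀, hn₀⟩ := eventually_atTop.mp
    ((hev.and (eventually_ge_atTop N)).and (eventually_ge_atTop 1))
  obtain ⟨⟨hM, hN0⟩, h10⟩ := hn₀ n₀ le_rfl
  have hn₀R : (1:ℝ) ≤ (n₀:ℝ) := by exact_mod_cast h10
  set K := max (2*cc/(β-1)) (v n₀ * n₀) with hK
  have hK1 : 2*cc/(β-1) ≤ K := le_max_left _ _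
  have hKpos : 0 < K := lt_of_lt_of_le (div_pos (by linarith) (by linarith)) hK1
  have hccK : cc ≤ K*(β-1)/2 := by
    rw [div_le_iff₀ (by linarith : (0:ℝ) < β - 1)] at hK1
    linarith
  have hbase : v n₀ ≤ K * (1/(n₀:ℝ)) := by
    have h2 : v n₀ * n₀ ≤ K := le_max_right _ _
    calc v n₀ = (v n₀ * n₀) * (1/(n₀:ℝ)) := by field_simp
      _ ≤ K * (1/(n₀:ℝ)) := mul_le_mul_of_nonneg_right h2 (by positivity)
  have hbound : ∀ n, n₀ ≤ n → v n ≤ K * (1/(n:ℝ)) := by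
    apply ind_bound _ _ _ hbase
    intro n hn ih
    obtain ⟨⟨hMn, hNn⟩, h1n⟩ := hn₀ n hn
    have hx1 : (1:ℝ) ≤ (n:ℝ) := by exact_mod_cast h1n
    have hx0 : (0:ℝ) < (n:ℝ) := by linarith
    have hxp : (0:ℝ) < (n:ℝ)+1 := by linarith
    have hcast : ((n+1:ℕ):ℝ) = (n:ℝ)+1 := by push_cast; ring
    rw [hcast]
    have hβx : β ≤ (n:ℝ) := le_trans (le_max_right _ _) hMn
    have hcx : 2*cc/(β-1) ≤ (n:ℝ) := le_trans (le_max_left _ _) hMn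
    have hccx : cc/((n:ℝ)+1) ≤ (β-1)/2 := by
      rw [div_le_iff₀ hxp]
      rw [div_le_iff₀ (by linarith : (0:ℝ) < β-1)] at hcx
      nlinarith
    have hρ : 0 ≤ 1 - β/((n:ℝ)+1) + cc/((n:ℝ)+1)^2 :=
      rho_nonneg β cc _ (by linarith) hcc.le hx0
    calc v (n+1) ≤ (1 - β/((n:ℝ)+1) + cc/((n:ℝ)+1)^2) * v n + cc/((n:ℝ)+1)^2 := hrec n hNn
      _ ≤ (1 - β/((n:ℝ)+1) + cc/((n:ℝ)+1)^2) * (K * (1/(n:ℝ))) + cc/((n:ℝ)+1)^2 := by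
          have := mul_le_mul_of_nonneg_left ih hρ
          linarith
      _ ≤ K * (1/((n:ℝ)+1)) := step_gt β cc K _ hβ1 hcc hx1 hccx hccK hKpos
  rw [isBigO_iff]
  refine ⟨K, ?_⟩
  filter_upwards [eventually_ge_atTop n₀, eventually_ge_atTop 1] with n hn hn1
  have hb := hbound n hn
  have hx : (1:ℝ) ≤ (n:ℝ) := by exact_mod_cast hn1
  have hg : ((n:ℝ)) ^ (-(1:ℝ)) = 1/(n:ℝ) := by
    rw [Real.rpow_neg_one]; exact inv_eq_one_div _
  rw [Real.norm_eq_abs, Real.norm_eq_abs, abs_of_nonneg (hv n), hg,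
    abs_of_nonneg (by positivity : (0:ℝ) ≤ 1/(n:ℝ))]
  exact hb
lemma step_eq (cc K x : ℝ) (hcc : 0 < cc) (hx : 2 ≤ x)
    (hlogx : cc * Real.log x / x ≤ 1/2) (hccK : cc ≤ K/2) (hK : 0 < K) :
    (1 - 1/(x+1) + cc/(x+1)^2) * (K * (Real.log x / x)) + cc/(x+1)^2
      ≤ K * (Real.log (x+1) / (x+1)) := by
  have hx0 : (0:ℝ) < x := by linarith
  have hxp : (0:ℝ) < x + 1 := by linarith
  have hL : 0 ≤ Real.log x := Real.log_nonneg (by linarith)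
  have hlog : 1/(x+1) ≤ Real.log (x+1) - Real.log x := by
    have hd : Real.log ((x+1)/x) = Real.log (x+1) - Real.log x :=
      Real.log_div (by linarith) hx0.ne'
    have h2 := Real.one_sub_inv_le_log_of_pos (show (0:ℝ) < (x+1)/x by positivity)
    have e : 1 - ((x+1)/x)⁻¹ = 1/(x+1) := by
      rw [inv_div]
      field_simp
      ring
    rw [e, hd] at h2
    exact h2
  have e1 : (1 - 1/(x+1) + cc/(x+1)^2) * (Real.log x / x)
      = Real.log x/(x+1) + (cc * Real.log x / x) * (1/(x+1)^2) := by
    field_simp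
    ring
  have e2 : (cc * Real.log x / x) * (1/(x+1)^2) ≤ (1/2) * (1/(x+1)^2) :=
    mul_le_mul_of_nonneg_right hlogx (by positivity)
  have e3 : Real.log x/(x+1) + (1/(x+1)) * (1/(x+1)) ≤ Real.log (x+1)/(x+1) := by
    have h3 := mul_le_mul_of_nonneg_right hlog (le_of_lt (by positivity : (0:ℝ) < 1/(x+1)))
    have e4 : (Real.log (x+1) - Real.log x) * (1/(x+1))
        = Real.log (x+1)/(x+1) - Real.log x/(x+1) := by ring
    rw [e4] at h3
    linarith
  have e5 : (1/(x+1)) * (1/(x+1)) = 1/(x+1)^2 := by rw [div_mul_div_comm, one_mul, sq]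
  have hcore : (1 - 1/(x+1) + cc/(x+1)^2) * (Real.log x / x) + (1/2) * (1/(x+1)^2)
      ≤ Real.log (x+1)/(x+1) := by
    rw [e1]
    rw [e5] at e3
    linarith
  have hc := mul_le_mul_of_nonneg_left hcore hK.le
  have h5 : cc/(x+1)^2 ≤ K * ((1/2) * (1/(x+1)^2)) := by
    calc cc/(x+1)^2 ≤ (K/2)/(x+1)^2 := div_le_div_of_nonneg_right hccK (by positivity)
      _ = K * ((1/2) * (1/(x+1)^2)) := by ring
  nlinarith [hc, h5]

lemma case_eq (cc : ℝ) (hcc : 0 < cc)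
    (v : ℕ → ℝ) (hv : ∀ n, 0 ≤ v n) (N : ℕ)
    (hrec : ∀ n, N ≤ n → v (n+1) ≤ (1 - 1/((n:ℝ)+1) + cc/((n:ℝ)+1)^2) * v n + cc/((n:ℝ)+1)^2) :
    (fun n : ℕ => v n) =O[atTop] fun n : ℕ => Real.log n / n := by
  have hev : ∀ᶠ n : ℕ in atTop, cc * Real.log n / n ≤ 1/2 := by
    have h := Real.isLittleO_log_id_atTop.bound (show (0:ℝ) < 1/(2*cc) by positivity)
    have h2 := tendsto_natCast_atTop_atTop.eventually (h.and (eventually_ge_atTop (1:ℝ)))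
    filter_upwards [h2] with n hn
    obtain ⟨hb, h1⟩ := hn
    simp only [Real.norm_eq_abs, id] at hb
    have h1' : (0:ℝ) < (n:ℝ) := by linarith
    have hlogle : Real.log n ≤ 1/(2*cc) * n := by
      calc Real.log n ≤ |Real.log n| := le_abs_self _
        _ ≤ 1/(2*cc) * |(n:ℝ)| := hb
        _ = 1/(2*cc) * n := by rw [abs_of_nonneg h1'.le]
    rw [div_le_iff₀ h1']
    have := mul_le_mul_of_nonneg_left hlogle hcc.le
    calc cc * Real.log n ≤ cc * (1/(2*cc) * n) := this
      _ = 1/2 * n := by field_simp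
  obtain ⟨n₀, hn₀⟩ := eventually_atTop.mp
    ((hev.and (eventually_ge_atTop N)).and (eventually_ge_atTop 2))
  obtain ⟨⟨hM, hN0⟩, h20⟩ := hn₀ n₀ le_rfl
  have hn₀R : (2:ℝ) ≤ (n₀:ℝ) := by exact_mod_cast h20
  have hlogpos : 0 < Real.log n₀ := Real.log_pos (by linarith)
  set K := max (2*cc) (v n₀ * n₀ / Real.log n₀) with hK
  have hK1 : 2*cc ≤ K := le_max_left _ _
  have hKpos : 0 < K := lt_of_lt_of_le (by linarith) hK1
  have hccK : cc ≤ K/2 := by linarith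
  have hbase : v n₀ ≤ K * (Real.log n₀/(n₀:ℝ)) := by
    have h2 : v n₀ * n₀ / Real.log n₀ ≤ K := le_max_right _ _
    have e : v n₀ = (v n₀ * n₀ / Real.log n₀) * (Real.log n₀/(n₀:ℝ)) := by
      field_simp
    rw [e]
    exact mul_le_mul_of_nonneg_right h2 (by positivity)
  have hbound : ∀ n, n₀ ≤ n → v n ≤ K * (Real.log n/(n:ℝ)) := by
    apply ind_bound _ _ _ hbase
    intro n hn ih
    obtain ⟨⟨hMn, hNn⟩, h2n⟩ := hn₀ n hn
    have hx2 : (2:ℝ) ≤ (n:ℝ) := by exact_mod_cast h2n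
    have hx0 : (0:ℝ) < (n:ℝ) := by linarith
    have hcast : ((n+1:ℕ):ℝ) = (n:ℝ)+1 := by push_cast; ring
    rw [hcast]
    have hρ : 0 ≤ 1 - 1/((n:ℝ)+1) + cc/((n:ℝ)+1)^2 :=
      rho_nonneg 1 cc _ (by linarith) hcc.le hx0
    calc v (n+1) ≤ (1 - 1/((n:ℝ)+1) + cc/((n:ℝ)+1)^2) * v n + cc/((n:ℝ)+1)^2 := hrec n hNn
      _ ≤ (1 - 1/((n:ℝ)+1) + cc/((n:ℝ)+1)^2) * (K * (Real.log n/(n:ℝ))) + cc/((n:ℝ)+1)^2 := by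
          have := mul_le_mul_of_nonneg_left ih hρ
          linarith
      _ ≤ K * (Real.log ((n:ℝ)+1)/((n:ℝ)+1)) := step_eq cc K _ hcc hx2 hMn hccK hKpos
  rw [isBigO_iff]
  refine ⟨K, ?_⟩
  filter_upwards [eventually_ge_atTop n₀, eventually_ge_atTop 1] with n hn hn1
  have hb := hbound n hn
  have hx : (1:ℝ) ≤ (n:ℝ) := by exact_mod_cast hn1
  have hg : (0:ℝ) ≤ Real.log n / n := by
    apply div_nonneg (Real.log_nonneg hx) (by linarith)
  rw [Real.norm_eq_abs, Real.norm_eq_abs, abs_of_nonneg (hv n), abs_of_nonneg hg]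
  exact hb
lemma step_lt (β cc K x : ℝ) (hβ0 : 0 < β) (hβ1 : β < 1) (hcc : 0 < cc) (hx1 : 1 ≤ x)
    (hccK : cc ≤ K) (hK : 0 < K) :
    (1 - β/(x+1) + cc/(x+1)^2) * (K * (x ^ (-β) - (2*(β+cc+1)/(1-β))/x)) + cc/(x+1)^2
      ≤ K * ((x+1) ^ (-β) - (2*(β+cc+1)/(1-β))/(x+1)) := by
  have hx0 : (0:ℝ) < x := by linarith
  have hxp : (0:ℝ) < x + 1 := by linarith
  have h1β : (0:ℝ) < 1 - β := by linarith
  set A := 2*(β+cc+1)/(1-β) with hAdef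
  have hA0 : 0 ≤ A := div_nonneg (by linarith) (by linarith)
  have hcore : (1 - β/(x+1) + cc/(x+1)^2) * (x ^ (-β) - A/x) + 1/(x+1)^2
      ≤ (x+1) ^ (-β) - A/(x+1) := by
    have hb := key_rpow x β hx1 hβ0.le hβ1.le
    have hP1 : x ^ (-β) ≤ 1 := Real.rpow_le_one_of_one_le_of_nonpos hx1 (by linarith)
    have hP0 : 0 ≤ x ^ (-β) := Real.rpow_nonneg (by linarith) _
    have d6 : (1 - β/(x+1) + cc/(x+1)^2) * (A/x) - A/(x+1)
        = A*(1-β)/(x*(x+1)) + A*cc/(x*(x+1)^2) := by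
      field_simp
      ring
    have dA : A*(1-β) = 2*(β+cc+1) := by
      rw [hAdef]
      field_simp
    have ea : β/x - β/(x+1) = β/(x*(x+1)) := by
      field_simp
      ring
    have e : (1 - β/(x+1) + cc/(x+1)^2) * (x ^ (-β))
        = x ^ (-β) * (1 - β/x) + x ^ (-β) * ((β/x - β/(x+1)) + cc/(x+1)^2) := by ring
    rw [ea] at e
    have hnn1 : 0 ≤ β/(x*(x+1)) + cc/(x+1)^2 := by
      have : 0 ≤ β/(x*(x+1)) := div_nonneg hβ0.le (mul_pos hx0 hxp).le
      have : 0 ≤ cc/(x+1)^2 := by positivity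
      linarith
    have h5 : x ^ (-β) * (β/(x*(x+1)) + cc/(x+1)^2) ≤ β/(x*(x+1)) + cc/(x+1)^2 := by
      nlinarith
    have h1 : (1 - β/(x+1) + cc/(x+1)^2) * (x ^ (-β))
        ≤ (x+1) ^ (-β) + (β/(x*(x+1)) + cc/(x+1)^2) := by
      rw [e]; linarith
    have h6 : β/(x*(x+1)) + cc/(x+1)^2 + 1/(x+1)^2 ≤ A*(1-β)/(x*(x+1)) := by
      have hAe : A*(1-β)/(x*(x+1)) = 2*(β+cc+1)/(x*(x+1)) := by rw [dA]
      have hxx : (0:ℝ) < x*(x+1) := mul_pos hx0 hxp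
      have hxx2 : x*(x+1) ≤ (x+1)^2 := by nlinarith
      have gcc : cc/(x+1)^2 ≤ cc/(x*(x+1)) :=
        div_le_div_of_nonneg_left hcc.le hxx hxx2
      have gone : 1/(x+1)^2 ≤ 1/(x*(x+1)) :=
        div_le_div_of_nonneg_left one_pos.le hxx hxx2
      have esum : β/(x*(x+1)) + cc/(x*(x+1)) + 1/(x*(x+1)) = (β+cc+1)/(x*(x+1)) := by ring
      have e2 : 2*(β+cc+1)/(x*(x+1)) = 2*((β+cc+1)/(x*(x+1))) := by ring
      have hnn2 : 0 ≤ (β+cc+1)/(x*(x+1)) := div_nonneg (by linarith) hxx.le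
      rw [hAe, e2]
      linarith
    have hAcc : 0 ≤ A*cc/(x*(x+1)^2) := by
      exact div_nonneg (mul_nonneg hA0 hcc.le) (mul_pos hx0 (pow_pos hxp 2)).le
    have egoal : (1 - β/(x+1) + cc/(x+1)^2) * (x ^ (-β) - A/x)
        = (1 - β/(x+1) + cc/(x+1)^2) * (x ^ (-β))
          - (1 - β/(x+1) + cc/(x+1)^2) * (A/x) := by ring
    rw [egoal]
    linarith
  have hc := mul_le_mul_of_nonneg_left hcore hK.le
  have h5 : cc/(x+1)^2 ≤ K * (1/(x+1)^2) := by
    calc cc/(x+1)^2 ≤ K/(x+1)^2 := div_le_div_of_nonneg_right hccK (by positivity)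
      _ = K * (1/(x+1)^2) := by ring
  nlinarith [hc, h5]

lemma case_lt (β cc : ℝ) (hβ0 : 0 < β) (hβ1 : β < 1) (hcc : 0 < cc)
    (v : ℕ → ℝ) (hv : ∀ n, 0 ≤ v n) (N : ℕ)
    (hrec : ∀ n, N ≤ n → v (n+1) ≤ (1 - β/((n:ℝ)+1) + cc/((n:ℝ)+1)^2) * v n + cc/((n:ℝ)+1)^2) :
    (fun n : ℕ => v n) =O[atTop] fun n : ℕ => (n:ℝ) ^ (-β) := by
  have h1β : (0:ℝ) < 1 - β := by linarith
  set A := 2*(β+cc+1)/(1-β) with hAdef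
  have hA0 : 0 ≤ A := div_nonneg (by linarith) (by linarith)
  have hev : ∀ᶠ n : ℕ in atTop, A < (n:ℝ) ^ (1-β) := by
    have ht : Tendsto (fun n : ℕ => ((n:ℝ)) ^ (1-β)) atTop atTop :=
      (tendsto_rpow_atTop h1β).comp tendsto_natCast_atTop_atTop
    exact ht.eventually_gt_atTop A
  obtain ⟨n₀, hn₀⟩ := eventually_atTop.mp
    ((hev.and (eventually_ge_atTop N)).and (eventually_ge_atTop 1))
  obtain ⟨⟨hAn, hN0⟩, h10⟩ := hn₀ n₀ le_rfl
  have hn₀R : (1:ℝ) ≤ (n₀:ℝ) := by exact_mod_cast h10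
  have hn₀pos : (0:ℝ) < (n₀:ℝ) := by linarith
  have hb0 : 0 < (n₀:ℝ) ^ (-β) - A/(n₀:ℝ) := by
    have e : ((n₀:ℝ)) ^ (1-β) = (n₀:ℝ) * ((n₀:ℝ)) ^ (-β) := by
      rw [show (1-β) = 1 + (-β) by ring, Real.rpow_add hn₀pos, Real.rpow_one]
    rw [e] at hAn
    rw [sub_pos, div_lt_iff₀ hn₀pos]
    linarith
  set K := max cc (v n₀ / ((n₀:ℝ) ^ (-β) - A/(n₀:ℝ))) with hK
  have hKcc : cc ≤ K := le_max_left _ _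
  have hKpos : 0 < K := lt_of_lt_of_le hcc hKcc
  have hbase : v n₀ ≤ K * ((n₀:ℝ) ^ (-β) - A/(n₀:ℝ)) := by
    have h2 : v n₀ / ((n₀:ℝ) ^ (-β) - A/(n₀:ℝ)) ≤ K := le_max_right _ _
    exact (div_le_iff₀ hb0).mp h2
  have hbound : ∀ n, n₀ ≤ n → v n ≤ K * ((n:ℝ) ^ (-β) - A/(n:ℝ)) := by
    apply ind_bound _ _ _ hbase
    intro n hn ih
    obtain ⟨⟨hAn', hNn⟩, h1n⟩ := hn₀ n hn
    have hx1 : (1:ℝ) ≤ (n:ℝ) := by exact_mod_cast h1n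
    have hx0 : (0:ℝ) < (n:ℝ) := by linarith
    have hcast : ((n+1:ℕ):ℝ) = (n:ℝ)+1 := by push_cast; ring
    rw [hcast]
    have hρ : 0 ≤ 1 - β/((n:ℝ)+1) + cc/((n:ℝ)+1)^2 :=
      rho_nonneg β cc _ (by linarith) hcc.le hx0
    calc v (n+1) ≤ (1 - β/((n:ℝ)+1) + cc/((n:ℝ)+1)^2) * v n + cc/((n:ℝ)+1)^2 := hrec n hNn
      _ ≤ (1 - β/((n:ℝ)+1) + cc/((n:ℝ)+1)^2) * (K * ((n:ℝ) ^ (-β) - A/(n:ℝ)))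
            + cc/((n:ℝ)+1)^2 := by
          have := mul_le_mul_of_nonneg_left ih hρ
          linarith
      _ ≤ K * (((n:ℝ)+1) ^ (-β) - A/((n:ℝ)+1)) := by
          have := step_lt β cc K (n:ℝ) hβ0 hβ1 hcc hx1 hKcc hKpos
          rw [← hAdef] at this
          exact this
  rw [isBigO_iff]
  refine ⟨K, ?_⟩
  filter_upwards [eventually_ge_atTop n₀, eventually_ge_atTop 1] with n hn hn1
  have hb := hbound n hn
  have hx : (1:ℝ) ≤ (n:ℝ) := by exact_mod_cast hn1
  have hg : (0:ℝ) ≤ (n:ℝ) ^ (-β) := Real.rpow_nonneg (by linarith) _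
  rw [Real.norm_eq_abs, Real.norm_eq_abs, abs_of_nonneg (hv n), abs_of_nonneg hg]
  have hAx : 0 ≤ A/(n:ℝ) := div_nonneg hA0 (by linarith)
  nlinarith [hb]

/-- Harmonic-rate deterministic recursion: if `v_{n+1} ≤ (1 − μα/(n+1) + Cα²/(n+1)²)v_n
+ Cα²/(n+1)²` for `n ≥ N`, then `v_n = O(n^{−min{μα,1}})` when `μα ≠ 1`, and
`v_n = O(log n / n)` when `μα = 1`. -/
theorem harmonic_recursion_rate (μ α C : ℝ) (hμ : 0 < μ) (hα : 0 < α) (hC : 0 < C)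
    (v : ℕ → ℝ) (hv : ∀ n, 0 ≤ v n) (N : ℕ)
    (hrec : ∀ n, N ≤ n →
      v (n + 1) ≤ (1 - μ * α / ((n : ℝ) + 1) + C * α ^ 2 / ((n : ℝ) + 1) ^ 2) * v n
        + C * α ^ 2 / ((n : ℝ) + 1) ^ 2) :
    (μ * α ≠ 1 →
      (fun n : ℕ => v n) =O[atTop] fun n : ℕ => (n : ℝ) ^ (-(min (μ * α) 1))) ∧
    (μ * α = 1 →
      (fun n : ℕ => v n) =O[atTop] fun n : ℕ => Real.log n / n) := by
  have hβ0 : 0 < μ * α := mul_pos hμ hα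
  have hcc : 0 < C * α ^ 2 := by positivity
  constructor
  · intro hne
    rcases lt_or_gt_of_ne hne with hlt | hgt
    · have h := case_lt (μ*α) (C*α^2) hβ0 hlt hcc v hv N hrec
      simpa [min_eq_left hlt.le] using h
    · have h := case_gt (μ*α) (C*α^2) hgt hcc v hv N hrec
      simpa [min_eq_right hgt.le] using h
  · intro heq
    rw [heq] at hrec
    exact case_eq (C*α^2) hcc v hv N hrec
end

section
/- Let μ, α, C > 0 and 0 < η < 1, and suppose a nonnegative sequence v_n satisfies, for all n ≥ N, v_{n+1} ≤ (1 − (μα/2)(n+1)^{−η})·v_n + Cα²(n+1)^{−2η}, where additionally (n+2)^{−η} ≥ (n+1)^{−η} − (μα/4)(n+1)^{−2η} holds for all n ≥ N. Then there exists B < ∞ such that v_n ≤ B(n+1)^{−η} for all n ≥ N. -/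
set_option maxHeartbeats 1600000 in
/-- Sub-harmonic deterministic recursion: if
`v_{n+1} ≤ (1 − (μα/2)(n+1)^{−η})v_n + Cα²(n+1)^{−2η}` for `n ≥ N`, and
`(n+2)^{−η} ≥ (n+1)^{−η} − (μα/4)(n+1)^{−2η}` for `n ≥ N`, then there is
`B` with `v_n ≤ B(n+1)^{−η}` for all `n ≥ N`. -/
theorem subharmonic_recursion_rate (μ α C η : ℝ)
    (hμ : 0 < μ) (hα : 0 < α) (hC : 0 < C) (hη1 : 0 < η) (hη2 : η < 1)
    (v : ℕ → ℝ) (hv : ∀ n, 0 ≤ v n) (N : ℕ)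
    (hrec : ∀ n, N ≤ n →
      v (n + 1) ≤ (1 - (μ * α / 2) * ((n : ℝ) + 1) ^ (-η)) * v n
        + C * α ^ 2 * ((n : ℝ) + 1) ^ (-(2 * η)))
    (hcomp : ∀ n, N ≤ n →
      ((n : ℝ) + 1) ^ (-η) - (μ * α / 4) * ((n : ℝ) + 1) ^ (-(2 * η))
        ≤ ((n : ℝ) + 2) ^ (-η)) :
    ∃ B : ℝ, ∀ n, N ≤ n → v n ≤ B * ((n : ℝ) + 1) ^ (-η) := by
  set B := max (max (v N * ((N : ℝ) + 1) ^ η) (4 * C * α / μ)) (2 * C * α ^ 2) with hBdef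
  have hB0 : 0 < B := lt_of_lt_of_le (by positivity) (le_max_right _ _)
  have hB1 : 4 * C * α / μ ≤ B := le_trans (le_max_right _ _) (le_max_left _ _)
  have hB2 : 2 * C * α ^ 2 ≤ B := le_max_right _ _
  refine ⟨B, ?_⟩
  intro n hn
  induction n, hn using Nat.le_induction with
  | base =>
    have hx : (0 : ℝ) < (N : ℝ) + 1 := by positivity
    have h1 : v N * ((N : ℝ) + 1) ^ η ≤ B := le_trans (le_max_left _ _) (le_max_left _ _)
    have hpos : (0 : ℝ) < ((N : ℝ) + 1) ^ (-η) := Real.rpow_pos_of_pos hx _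
    calc v N = v N * ((N : ℝ) + 1) ^ η * ((N : ℝ) + 1) ^ (-η) := by
          rw [mul_assoc, ← Real.rpow_add hx]; simp
      _ ≤ B * ((N : ℝ) + 1) ^ (-η) := by gcongr
  | succ n hn ih =>
    have hx : (0 : ℝ) < (n : ℝ) + 1 := by positivity
    set a : ℝ := ((n : ℝ) + 1) ^ (-η) with ha
    have hapos : 0 < a := Real.rpow_pos_of_pos hx _
    have ha1 : a ≤ 1 := Real.rpow_le_one_of_one_le_of_nonpos (by linarith) (by linarith)
    have hsq : ((n : ℝ) + 1) ^ (-(2 * η)) = a ^ 2 := by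
      rw [ha, ← Real.rpow_natCast (((n : ℝ) + 1) ^ (-η)) 2, ← Real.rpow_mul hx.le]
      norm_num; ring_nf
    have hgoal : (((n : ℕ) + 1 : ℕ) : ℝ) + 1 = (n : ℝ) + 2 := by push_cast; ring
    rw [hgoal]
    have hrec' := hrec n hn
    rw [hsq] at hrec'
    have hcomp' := hcomp n hn
    rw [hsq] at hcomp'
    have hCB : C * α ^ 2 ≤ μ * α / 4 * B := by
      have : μ * α / 4 * (4 * C * α / μ) = C * α ^ 2 := by field_simp
      nlinarith [mul_le_mul_of_nonneg_left hB1 (le_of_lt (by positivity : (0:ℝ) < μ * α / 4))]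
    by_cases hcase : 0 ≤ 1 - μ * α / 2 * a
    · have step1 : v (n + 1) ≤ (1 - μ * α / 2 * a) * (B * a) + C * α ^ 2 * a ^ 2 := by
        have := mul_le_mul_of_nonneg_left ih hcase
        linarith
      have step2 : (1 - μ * α / 2 * a) * (B * a) + C * α ^ 2 * a ^ 2
          ≤ B * (a - μ * α / 4 * a ^ 2) := by
        nlinarith [sq_nonneg a, mul_le_mul_of_nonneg_right hCB (sq_nonneg a)]
      have step3 : B * (a - μ * α / 4 * a ^ 2) ≤ B * ((n : ℝ) + 2) ^ (-η) := by
        exact mul_le_mul_of_nonneg_left hcomp' hB0.le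
      linarith
    · push_neg at hcase
      have step1 : v (n + 1) ≤ C * α ^ 2 * a ^ 2 := by
        have hneg : (1 - μ * α / 2 * a) * v n ≤ 0 :=
          mul_nonpos_of_nonpos_of_nonneg hcase.le (hv n)
        linarith
      have h2a : (1 / 2) * a ≤ ((n : ℝ) + 2) ^ (-η) := by
        have h21 : ((n : ℝ) + 2) ^ (-η) ≥ (2 * ((n : ℝ) + 1)) ^ (-η) :=
          Real.rpow_le_rpow_of_nonpos (by linarith) (by linarith) (by linarith)
        have hmul : (2 * ((n : ℝ) + 1)) ^ (-η) = (2 : ℝ) ^ (-η) * a := by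
          rw [ha, Real.mul_rpow (by norm_num) hx.le]
        have h12 : (1 / 2 : ℝ) ≤ (2 : ℝ) ^ (-η) := by
          have := Real.rpow_le_rpow_of_exponent_le (by norm_num : (1:ℝ) ≤ 2)
            (by linarith : -(1:ℝ) ≤ -η)
          rw [Real.rpow_neg_one] at this
          linarith
        have := mul_le_mul_of_nonneg_right h12 hapos.le
        rw [hmul] at h21
        linarith
      have h' : C * α ^ 2 * a * a ≤ C * α ^ 2 * a * 1 :=
        mul_le_mul_of_nonneg_left ha1 (by positivity)
      have hA1 : C * α ^ 2 * a ^ 2 ≤ C * α ^ 2 * a := by nlinarith [h']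
      have hCB2 : C * α ^ 2 ≤ B / 2 := by linarith
      have hA2 : C * α ^ 2 * a ≤ B / 2 * a :=
        mul_le_mul_of_nonneg_right hCB2 hapos.le
      have : C * α ^ 2 * a ^ 2 ≤ B / 2 * a := le_trans hA1 hA2
      have := mul_le_mul_of_nonneg_left h2a hB0.le
      linarith
end

section
/- Let μ, C > 0, and for n ≥ N suppose 0 ≤ 1 − μ·α/(j+1) + Cα²/(j+1)² for all j ≥ N. Then for all n > i ≥ N−1, ∏_{j=i+1}^{n−1} (1 − μα/(j+1) + Cα²/(j+1)²) ≤ exp(2Cα²)·((i+2)/(n+1))^{μα}. -/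
/-! Write each factor as `1 + x_j` and use `1 + x ≤ eˣ` (the factors are nonnegative, so the
products compare). The exponent is `-μα·∑ 1/(j+1) + Cα²·∑ 1/(j+1)²`: the harmonic sum over
`[i+1, n)` is at least `log((n+1)/(i+2))` by telescoping `log(1 + 1/(j+1)) ≤ 1/(j+1)`, and the
sum of inverse squares is at most `2`. -/

open Finset Real

theorem prod_le_exp_sum_sub_one {ι : Type*} (s : Finset ι) {f : ι → ℝ}
    (hf : ∀ i ∈ s, 0 ≤ f i) : ∏ i ∈ s, f i ≤ exp (∑ i ∈ s, (f i - 1)) := by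
  rw [exp_sum]
  exact prod_le_prod hf fun i _ => by simpa using add_one_le_exp (f i - 1)

theorem log_sub_log_le_sum_Ico_inv {a b : ℕ} (hab : a ≤ b) :
    log ((b : ℝ) + 1) - log ((a : ℝ) + 1) ≤ ∑ j ∈ Ico a b, 1 / ((j : ℝ) + 1) := by
  rw [← sum_Ico_sub (fun j : ℕ => log ((j : ℝ) + 1)) hab]
  refine sum_le_sum fun j _ => ?_
  have hj : (0 : ℝ) < (j : ℝ) + 1 := by positivity
  calc log (((j + 1 : ℕ) : ℝ) + 1) - log ((j : ℝ) + 1)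
      = log (((j : ℝ) + 1 + 1) / ((j : ℝ) + 1)) := by
        rw [log_div (by positivity) hj.ne']
        push_cast
        ring_nf
    _ ≤ ((j : ℝ) + 1 + 1) / ((j : ℝ) + 1) - 1 := log_le_sub_one_of_pos (by positivity)
    _ = 1 / ((j : ℝ) + 1) := by field_simp; ring

theorem sum_Ico_inv_succ_sq_le_two (a b : ℕ) :
    ∑ j ∈ Ico a b, 1 / ((j : ℝ) + 1) ^ 2 ≤ 2 := by
  calc ∑ j ∈ Ico a b, 1 / ((j : ℝ) + 1) ^ 2
      = ∑ m ∈ Ioo a (b + 1), ((m : ℝ) ^ 2)⁻¹ := by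
        rw [← Ico_add_one_left_eq_Ioo, ← sum_Ico_add' (fun m : ℕ => ((m : ℝ) ^ 2)⁻¹)]
        simp
    _ ≤ 2 / ((a : ℝ) + 1) := sum_Ioo_inv_sq_le a (b + 1)
    _ ≤ 2 := div_le_self zero_le_two (by simp)

/-- Product bound for the harmonic-rate analysis: if the factors
`1 − μα/(j+1) + Cα²/(j+1)²` are nonnegative for `j ≥ N`, then for `n > i` with
`i + 1 ≥ N`,
`∏_{j=i+1}^{n−1} (1 − μα/(j+1) + Cα²/(j+1)²) ≤ exp(2Cα²)·((i+2)/(n+1))^{μα}`. -/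
theorem harmonic_product_bound (μ C α : ℝ) (hμ : 0 < μ) (hC : 0 < C) (hα : 0 < α)
    (N : ℕ)
    (hpos : ∀ j : ℕ, N ≤ j →
      0 ≤ 1 - μ * α / ((j : ℝ) + 1) + C * α ^ 2 / ((j : ℝ) + 1) ^ 2) :
    ∀ i n : ℕ, N ≤ i + 1 → i < n →
      ∏ j ∈ Finset.Ico (i + 1) n,
          (1 - μ * α / ((j : ℝ) + 1) + C * α ^ 2 / ((j : ℝ) + 1) ^ 2)
        ≤ Real.exp (2 * C * α ^ 2) * (((i : ℝ) + 2) / ((n : ℝ) + 1)) ^ (μ * α) := by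
  intro i n hN hin
  set H := ∑ j ∈ Ico (i + 1) n, 1 / ((j : ℝ) + 1)
  set S := ∑ j ∈ Ico (i + 1) n, 1 / ((j : ℝ) + 1) ^ 2
  have hH : log ((n : ℝ) + 1) - log ((i : ℝ) + 2) ≤ H := by
    convert log_sub_log_le_sum_Ico_inv hin using 3
    push_cast
    ring
  have hS : S ≤ 2 := sum_Ico_inv_succ_sq_le_two (i + 1) n
  have hμα : 0 ≤ μ * α := by positivity
  have hCα : 0 ≤ C * α ^ 2 := by positivity
  calc ∏ j ∈ Ico (i + 1) n, (1 - μ * α / ((j : ℝ) + 1) + C * α ^ 2 / ((j : ℝ) + 1) ^ 2)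
      ≤ exp (∑ j ∈ Ico (i + 1) n,
          (1 - μ * α / ((j : ℝ) + 1) + C * α ^ 2 / ((j : ℝ) + 1) ^ 2 - 1)) :=
        prod_le_exp_sum_sub_one _ fun j hj => hpos j (hN.trans (mem_Ico.1 hj).1)
    _ = exp (-(μ * α * H) + C * α ^ 2 * S) := by
        rw [mul_sum, mul_sum, ← sum_neg_distrib, ← sum_add_distrib]
        exact congrArg exp (sum_congr rfl fun j _ => by ring)
    _ ≤ exp (2 * C * α ^ 2 + μ * α * (log ((i : ℝ) + 2) - log ((n : ℝ) + 1))) :=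
        exp_le_exp.2 (by linarith [mul_le_mul_of_nonneg_left hH hμα,
          mul_le_mul_of_nonneg_left hS hCα])
    _ = exp (2 * C * α ^ 2) * (((i : ℝ) + 2) / ((n : ℝ) + 1)) ^ (μ * α) := by
        rw [rpow_def_of_pos (by positivity), log_div (by positivity) (by positivity), ← exp_add]
        ring_nf
end
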